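/- arXiv:0902.0808 — 17 statements merged into one kernel-verified Lean document; each statement's English description precedes it below -/
import Mathlib

section
/- Let R be a 2-torsion free semiprime ring and let U be a nonzero Lie ideal of R. If [u,v] = 0 for all u, v ∈ U, then U is contained in the center Z(R) of R. -/
/-- Let `R` be a 2-torsion free semiprime ring and `U` a nonzero Lie ideal of `R`.
If `[u,v] = 0` for all `u, v ∈ U`, then `U` is contained in the center of `R`. -/
theorem lie_ideal_comm_subset_center (R : Type*) [Ring R]
    (h2 : ∀ x : R, x + x = 0 → x = 0)
    (hsp : ∀ a : R, (∀ r : R, a * r * a = 0) → a = 0)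
    (U : AddSubgroup R)
    (hLie : ∀ u ∈ U, ∀ r : R, u * r - r * u ∈ U)
    (hne : U ≠ ⊥)
    (hcomm : ∀ u ∈ U, ∀ v ∈ U, u * v - v * u = 0) :
    ∀ u ∈ U, ∀ r : R, u * r = r * u := by
  intro u hu r
  set d : R → R := fun x => u * x - x * u with hd
  -- d² = 0
  have hd2 : ∀ x : R, d (d x) = 0 := fun x => hcomm u hu _ (hLie u hu x)
  -- Leibniz
  have hleib : ∀ x y : R, d (x * y) = d x * y + x * d y := by
    intro x y; simp only [hd]; noncomm_ring
  -- d x * d y = 0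
  have hdd : ∀ x y : R, d x * d y = 0 := by
    intro x y
    have h := hd2 (x * y)
    rw [hleib, ] at h
    have : d (d x * y + x * d y) = d (d x) * y + d x * d y + (d x * d y + x * d (d y)) := by
      simp only [hd]; noncomm_ring
    rw [this, hd2 x, hd2 y, zero_mul, mul_zero, zero_add, add_zero] at h
    exact h2 _ h
  -- d r * s * d r = 0 for all s
  have key : ∀ s : R, d r * s * d r = 0 := by
    intro s
    have h1 : d r * d (s * r) = 0 := hdd r (s * r)
    rw [hleib] at h1
    have h2' : d r * (d s * r) = 0 := by
      rw [← mul_assoc, hdd r s, zero_mul]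
    rw [mul_add, h2', zero_add, ← mul_assoc] at h1
    exact h1
  have := hsp _ key
  have : u * r - r * u = 0 := this
  exact sub_eq_zero.mp this
end

section
/- Let R be a 2-torsion free ring and let U be a Lie ideal of R such that [u,v] = 0 for all u, v ∈ U. Then [u,r]·[u,t] = 0 for all u ∈ U and all r, t ∈ R. -/
/-- Let `R` be a 2-torsion free ring and `U` a Lie ideal with `[U,U] = 0`.
Then `[u,r] * [u,t] = 0` for all `u ∈ U` and `r, t ∈ R`. -/
theorem comm_lie_ideal_brackets_mul_eq_zero (R : Type*) [Ring R]
    (h2 : ∀ x : R, x + x = 0 → x = 0)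
    (U : AddSubgroup R)
    (hLie : ∀ u ∈ U, ∀ r : R, u * r - r * u ∈ U)
    (hcomm : ∀ u ∈ U, ∀ v ∈ U, u * v - v * u = 0) :
    ∀ u ∈ U, ∀ r t : R, (u * r - r * u) * (u * t - t * u) = 0 := by
  intro u hu r t
  have ha := hcomm u hu _ (hLie u hu r)
  have hb := hcomm u hu _ (hLie u hu t)
  have hc := hcomm u hu _ (hLie u hu (r * t))
  apply h2
  have key : (u * r - r * u) * (u * t - t * u) + (u * r - r * u) * (u * t - t * u)
      = (u * (u * (r * t) - (r * t) * u) - (u * (r * t) - (r * t) * u) * u)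
        - (u * (u * r - r * u) - (u * r - r * u) * u) * t
        - r * (u * (u * t - t * u) - (u * t - t * u) * u) := by
    noncomm_ring
  rw [key, ha, hb, hc]
  simp
end

section
/- Let R be a 2-torsion free semiprime ring, U a square closed Lie ideal of R, and M the two-sided ideal of R generated by all commutators [u,v] with u, v ∈ U (i.e., M = R[U,U]R). Let d be a derivation of R and a ∈ R. If a·d(u) = 0 for all u ∈ U, then a·d(m) = 0 for all m ∈ M. -/
/-- Let `R` be a 2-torsion free semiprime ring, `U` a square closed Lie ideal of `R`,
and `M = R[U,U]R` the two-sided ideal generated by the commutators `[u,v]`, `u, v ∈ U`.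
If `d` is a derivation of `R` and `a ∈ R` satisfies `a * d u = 0` for all `u ∈ U`,
then `a * d m = 0` for all `m ∈ M`. -/
theorem ann_der_lie_ideal_extends_to_ideal (R : Type*) [Ring R]
    (h2 : ∀ x : R, x + x = 0 → x = 0)
    (hsp : ∀ a : R, (∀ r : R, a * r * a = 0) → a = 0)
    (U : AddSubgroup R)
    (hLie : ∀ u ∈ U, ∀ r : R, u * r - r * u ∈ U)
    (hsq : ∀ u ∈ U, u * u ∈ U)
    (d : R → R)
    (hadd : ∀ x y : R, d (x + y) = d x + d y)
    (hleib : ∀ x y : R, d (x * y) = d x * y + x * d y)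
    (a : R)
    (ha : ∀ u ∈ U, a * d u = 0) :
    ∀ m ∈ TwoSidedIdeal.span {x : R | ∃ u ∈ U, ∃ v ∈ U, x = u * v - v * u},
      a * d m = 0 := by
  have hd0 : d 0 = 0 := by
    have h := hadd 0 0
    rw [add_zero] at h
    exact left_eq_add.mp h
  have hneg : ∀ x : R, d (-x) = - d x := by
    intro x
    have h : d (-x) + d x = 0 := by rw [← hadd, neg_add_cancel, hd0]
    exact eq_neg_of_add_eq_zero_left h
  have hdsub : ∀ x y : R, d (x - y) = d x - d y := by
    intro x y; rw [sub_eq_add_neg, hadd, hneg, ← sub_eq_add_neg]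
  have h2m : ∀ u ∈ U, ∀ v ∈ U, u*v + u*v ∈ U := by
    intro u hu v hv
    have h1 : u*v + v*u ∈ U := by
      have e : u*v + v*u = (u+v)*(u+v) - u*u - v*v := by noncomm_ring
      rw [e]
      exact sub_mem (sub_mem (hsq _ (add_mem hu hv)) (hsq u hu)) (hsq v hv)
    have e2 : u*v + u*v = (u*v + v*u) + (u*v - v*u) := by noncomm_ring
    rw [e2]; exact add_mem h1 (hLie u hu v)
  -- L1 : a·U·d(U) = 0
  have L1 : ∀ u ∈ U, ∀ v ∈ U, a * u * d v = 0 := by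
    intro u hu v hv
    have key : a * d (u*v) = 0 := by
      apply h2
      have h := ha _ (h2m u hu v hv)
      rw [hadd] at h
      linear_combination (norm := noncomm_ring) h
    rw [hleib] at key
    linear_combination (norm := noncomm_ring) key - (ha u hu) * v
  -- L2 : a·v·d(r) = a·d(r)·v + a·r·d(v) for v ∈ U
  have L2 : ∀ v ∈ U, ∀ r : R, a * v * d r = a * d r * v + a * r * d v := by
    intro v hv r
    have h := ha _ (hLie v hv r)
    rw [hdsub, hleib, hleib] at h
    linear_combination (norm := noncomm_ring) h - (ha v hv) * r
  -- L3 : a·[w,r]·d(u) = 0 for w, u ∈ U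
  have L3 : ∀ w ∈ U, ∀ u ∈ U, ∀ r : R, a * w * r * d u = a * r * w * d u := by
    intro w hw u hu r
    have e1 : a * w * d (u*r - r*u) = 0 := L1 w hw _ (hLie u hu r)
    rw [hdsub, hleib, hleib] at e1
    have key : a * (w*u) * d r - (a * d r * (w*u) + a * r * d (w*u)) = 0 := by
      apply h2
      have h := L2 _ (h2m w hw u hu) r
      rw [hadd] at h
      linear_combination (norm := noncomm_ring) h
    rw [hleib] at key
    have e3 := L2 w hw r
    linear_combination (norm := noncomm_ring) - e1 + (L1 w hw u hu) * r + key - e3 * u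
  -- L4 : a·d(r)·[v,w] + a·r·d([v,w]) = 0 for v, w ∈ U
  have L4 : ∀ v ∈ U, ∀ w ∈ U, ∀ r : R,
      a * d r * (v*w - w*v) + a * r * d (v*w - w*v) = 0 := by
    intro v hv w hw r
    have f1 := L2 v hv (r*w)
    rw [hleib] at f1
    have f2 := L2 v hv r
    have f3 := L3 v hv w hw r
    rw [hdsub, hleib, hleib]
    linear_combination (norm := noncomm_ring) f1 - f2 * w - f3
  -- L5 : a·[v,w]·d(r) = 0
  have L5 : ∀ v ∈ U, ∀ w ∈ U, ∀ r : R, a * (v*w - w*v) * d r = 0 := by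
    intro v hv w hw r
    have h := L2 _ (hLie v hv w) r
    linear_combination (norm := noncomm_ring) h + L4 v hv w hw r
  -- L6 : a·[v,w]·r·d(s) = 0
  have L6 : ∀ v ∈ U, ∀ w ∈ U, ∀ r s : R, a * (v*w - w*v) * r * d s = 0 := by
    intro v hv w hw r s
    have h := L5 v hv w hw (r*s)
    rw [hleib] at h
    linear_combination (norm := noncomm_ring) h - (L5 v hv w hw r) * s
  -- L7 : a·x·[v,w]·d(u₀) = 0 for u₀ ∈ U
  have L7 : ∀ v ∈ U, ∀ w ∈ U, ∀ u₀ ∈ U, ∀ x : R,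
      a * x * (v*w - w*v) * d u₀ = 0 := by
    intro v hv w hw u₀ hu₀ x
    have h := L3 _ (hLie v hv w) u₀ hu₀ x
    linear_combination (norm := noncomm_ring) (L6 v hv w hw x u₀) - h
  -- L8 : a·x·[v,w]·y·d(u₀) = 0  (uses the Jacobi identity)
  have L8 : ∀ v ∈ U, ∀ w ∈ U, ∀ u₀ ∈ U, ∀ x y : R,
      a * x * (v*w - w*v) * y * d u₀ = 0 := by
    intro v hv w hw u₀ hu₀ x y
    have t1 := L7 v hv w hw u₀ hu₀ (x*y)
    have t2 := L7 _ (hLie v hv y) w hw u₀ hu₀ x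
    have t3 := L7 v hv _ (hLie w hw y) u₀ hu₀ x
    linear_combination (norm := noncomm_ring) t1 + t2 + t3
  -- L9 : a·x·[v,w]·y·u₀·d(s) = a·x·[v,w]·y·d(s)·u₀
  have L9 : ∀ v ∈ U, ∀ w ∈ U, ∀ u₀ ∈ U, ∀ x y s : R,
      a * x * (v*w - w*v) * y * u₀ * d s = a * x * (v*w - w*v) * y * d s * u₀ := by
    intro v hv w hw u₀ hu₀ x y s
    have h := L8 v hv w hw _ (hLie u₀ hu₀ s) x y
    rw [hdsub, hleib, hleib] at h
    linear_combination (norm := noncomm_ring) h - (L8 v hv w hw u₀ hu₀ x y) * s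
      + L8 v hv w hw u₀ hu₀ x (y*s)
  -- L10 : a·x·[v,w]·y·d(s)·[u₀,u₁] = 0
  have L10 : ∀ v ∈ U, ∀ w ∈ U, ∀ u₀ ∈ U, ∀ u₁ ∈ U, ∀ x y s : R,
      a * x * (v*w - w*v) * y * d s * (u₀*u₁ - u₁*u₀) = 0 := by
    intro v hv w hw u₀ hu₀ u₁ hu₁ x y s
    have g1 := L9 v hv w hw u₀ hu₀ x y (s*u₁)
    rw [hleib] at g1
    have g2 := L9 v hv w hw u₀ hu₀ x y s
    linear_combination (norm := noncomm_ring) g1 - g2 * u₁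
      - L8 v hv w hw u₁ hu₁ x (y*u₀*s) + (L8 v hv w hw u₁ hu₁ x (y*s)) * u₀
  -- L11 : a·x·[v,w]·y·d(s)·q·[u₀,u₁] = 0
  have L11 : ∀ v ∈ U, ∀ w ∈ U, ∀ u₀ ∈ U, ∀ u₁ ∈ U, ∀ x y s q : R,
      a * x * (v*w - w*v) * y * d s * q * (u₀*u₁ - u₁*u₀) = 0 := by
    intro v hv w hw u₀ hu₀ u₁ hu₁ x y s q
    have h := L10 v hv w hw u₀ hu₀ u₁ hu₁ x y (s*q)
    rw [hleib] at h
    linear_combination (norm := noncomm_ring) h - L10 v hv w hw u₀ hu₀ u₁ hu₁ x (y*s) q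
  -- L12 : a·x·[v,w]·y·d(s) = 0  (semiprimeness)
  have L12 : ∀ v ∈ U, ∀ w ∈ U, ∀ x y s : R,
      a * x * (v*w - w*v) * y * d s = 0 := by
    intro v hv w hw x y s
    apply hsp
    intro z
    have h := L11 v hv w hw v hv w hw x y s (z*a*x)
    linear_combination (norm := noncomm_ring) h * (y * d s)
  -- L13 : a·r·d([v,w]) = 0
  have L13 : ∀ v ∈ U, ∀ w ∈ U, ∀ r : R, a * r * d (v*w - w*v) = 0 := by
    intro v hv w hw r
    have hY : a * d r * (v*w - w*v) = 0 := by
      apply hsp; intro z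
      have h := L12 v hv w hw (d r) (z*a) r
      linear_combination (norm := noncomm_ring) h * (v*w - w*v)
    linear_combination (norm := noncomm_ring) L4 v hv w hw r - hY
  -- L14 : a·p·d(s)·q·[v,w] = 0
  have L14 : ∀ v ∈ U, ∀ w ∈ U, ∀ p q s : R,
      a * p * d s * q * (v*w - w*v) = 0 := by
    intro v hv w hw p q s
    apply hsp
    intro z
    have h := L12 v hv w hw (p * d s * q) (z*a*p) s
    linear_combination (norm := noncomm_ring) h * (q * (v*w - w*v))
  -- assemble the two-sided ideal of good elements
  intro m hm
  have zero_mem : (0:R) ∈ {m : R | (∀ r : R, a * r * d m = 0) ∧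
      (∀ p q s : R, a * p * d s * q * m = 0) ∧ (∀ p q s : R, a * p * m * q * d s = 0)} := by
    refine ⟨?_, ?_, ?_⟩ <;> intros <;> simp [hd0]
  have add_mem' : ∀ {x y : R}, x ∈ {m : R | (∀ r : R, a * r * d m = 0) ∧
      (∀ p q s : R, a * p * d s * q * m = 0) ∧ (∀ p q s : R, a * p * m * q * d s = 0)} →
      y ∈ {m : R | (∀ r : R, a * r * d m = 0) ∧
      (∀ p q s : R, a * p * d s * q * m = 0) ∧ (∀ p q s : R, a * p * m * q * d s = 0)} →
      x + y ∈ {m : R | (∀ r : R, a * r * d m = 0) ∧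
      (∀ p q s : R, a * p * d s * q * m = 0) ∧ (∀ p q s : R, a * p * m * q * d s = 0)} := by
    rintro x y ⟨h1, h2', h3⟩ ⟨g1, g2, g3⟩
    refine ⟨fun r => ?_, fun p q s => ?_, fun p q s => ?_⟩
    · rw [hadd]; linear_combination (norm := noncomm_ring) h1 r + g1 r
    · linear_combination (norm := noncomm_ring) h2' p q s + g2 p q s
    · linear_combination (norm := noncomm_ring) h3 p q s + g3 p q s
  have neg_mem' : ∀ {x : R}, x ∈ {m : R | (∀ r : R, a * r * d m = 0) ∧
      (∀ p q s : R, a * p * d s * q * m = 0) ∧ (∀ p q s : R, a * p * m * q * d s = 0)} →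
      -x ∈ {m : R | (∀ r : R, a * r * d m = 0) ∧
      (∀ p q s : R, a * p * d s * q * m = 0) ∧ (∀ p q s : R, a * p * m * q * d s = 0)} := by
    rintro x ⟨h1, h2', h3⟩
    refine ⟨fun r => ?_, fun p q s => ?_, fun p q s => ?_⟩
    · rw [hneg]; linear_combination (norm := noncomm_ring) - h1 r
    · linear_combination (norm := noncomm_ring) - h2' p q s
    · linear_combination (norm := noncomm_ring) - h3 p q s
  have mull : ∀ {x y : R}, y ∈ {m : R | (∀ r : R, a * r * d m = 0) ∧
      (∀ p q s : R, a * p * d s * q * m = 0) ∧ (∀ p q s : R, a * p * m * q * d s = 0)} →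
      x * y ∈ {m : R | (∀ r : R, a * r * d m = 0) ∧
      (∀ p q s : R, a * p * d s * q * m = 0) ∧ (∀ p q s : R, a * p * m * q * d s = 0)} := by
    rintro x y ⟨h1, h2', h3⟩
    refine ⟨fun r => ?_, fun p q s => ?_, fun p q s => ?_⟩
    · rw [hleib]; linear_combination (norm := noncomm_ring) h2' r 1 x + h1 (r*x)
    · linear_combination (norm := noncomm_ring) h2' p (q*x) s
    · linear_combination (norm := noncomm_ring) h3 (p*x) q s
  have mulr : ∀ {x y : R}, x ∈ {m : R | (∀ r : R, a * r * d m = 0) ∧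
      (∀ p q s : R, a * p * d s * q * m = 0) ∧ (∀ p q s : R, a * p * m * q * d s = 0)} →
      x * y ∈ {m : R | (∀ r : R, a * r * d m = 0) ∧
      (∀ p q s : R, a * p * d s * q * m = 0) ∧ (∀ p q s : R, a * p * m * q * d s = 0)} := by
    rintro x y ⟨h1, h2', h3⟩
    refine ⟨fun r => ?_, fun p q s => ?_, fun p q s => ?_⟩
    · rw [hleib]; linear_combination (norm := noncomm_ring) (h1 r) * y + h3 r 1 y
    · linear_combination (norm := noncomm_ring) (h2' p q s) * y
    · linear_combination (norm := noncomm_ring) h3 p (y*q) s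
  have hmem : m ∈ TwoSidedIdeal.mk' _ zero_mem add_mem' neg_mem' mull mulr := by
    refine TwoSidedIdeal.mem_span_iff.mp hm _ ?_
    rintro x ⟨u, hu, v, hv, rfl⟩
    rw [SetLike.mem_coe, TwoSidedIdeal.mem_mk']
    exact ⟨fun r => L13 u hu v hv r, fun p q s => L14 u hu v hv p q s,
      fun p q s => L12 u hu v hv p q s⟩
  rw [TwoSidedIdeal.mem_mk'] at hmem
  obtain ⟨h1, -, -⟩ := hmem
  have hfin := h1 1
  linear_combination (norm := noncomm_ring) hfin
end

section
/- Let R be a 2-torsion free semiprime ring and U a square closed Lie ideal of R. If z ∈ U satisfies z·[u,v] = 0 for all u, v ∈ U, then [z,u] = 0 for all u ∈ U. -/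
/-- Let `R` be a 2-torsion free semiprime ring and `U` a square closed Lie ideal of `R`.
If `z ∈ U` satisfies `z * [u,v] = 0` for all `u, v ∈ U`, then `[z,u] = 0` for all `u ∈ U`. -/
theorem ann_comm_lie_ideal_centralizes (R : Type*) [Ring R]
    (h2 : ∀ x : R, x + x = 0 → x = 0)
    (hsp : ∀ a : R, (∀ r : R, a * r * a = 0) → a = 0)
    (U : AddSubgroup R)
    (hLie : ∀ u ∈ U, ∀ r : R, u * r - r * u ∈ U)
    (hsq : ∀ u ∈ U, u * u ∈ U)
    (z : R) (hz : z ∈ U)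
    (hzc : ∀ u ∈ U, ∀ v ∈ U, z * (u * v - v * u) = 0) :
    ∀ u ∈ U, z * u - u * z = 0 := by
  intro u hu
  apply hsp
  intro r
  have h1 : z * (z * u - u * z) = 0 := hzc z hz u hu
  have h2' : z * (z * (u * r - r * u) - (u * r - r * u) * z) = 0 :=
    hzc z hz _ (hLie u hu r)
  have h3 : z * (z * (u * (u * r) - (u * r) * u) - (u * (u * r) - (u * r) * u) * z) = 0 :=
    hzc z hz _ (hLie u hu (u * r))
  have h4 : z * (u * (z * r - r * z) - (z * r - r * z) * u) = 0 :=
    hzc u hu _ (hLie z hz r)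
  have h5 : z * (u * (z * (u * r) - (u * r) * z) - (z * (u * r) - (u * r) * z) * u) = 0 :=
    hzc u hu _ (hLie z hz (u * r))
  have key : (z * u - u * z) * r * (z * u - u * z) =
      -(u * (z * (z * u - u * z)) * r)
      + (z * (z * u - u * z)) * (u * r)
      + u * (z * (z * (u * r - r * u) - (u * r - r * u) * z))
      - z * (z * (u * (u * r) - (u * r) * u) - (u * (u * r) - (u * r) * u) * z)
      - u * (z * (u * (z * r - r * z) - (z * r - r * z) * u))
      + z * (u * (z * (u * r) - (u * r) * z) - (z * (u * r) - (u * r) * z) * u) := by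
    noncomm_ring
  rw [key, h1, h2', h3, h4, h5]
  simp
end

section
/- Let R be a 2-torsion free semiprime ring, U a nonzero square closed Lie ideal of R, and f an endomorphism of R such that f(U) = U. Then f is strong commutativity preserving on U (i.e., [f(x),f(y)] = [x,y] for all x, y ∈ U) if and only if f is centralizing on U (i.e., [f(x),x] ∈ Z(R) for all x ∈ U). -/
/-- Let `R` be a 2-torsion free semiprime ring, `U` a nonzero square closed Lie ideal of
`R`, and `f` an endomorphism of `R` with `f(U) = U`. Then `f` is strong commutativity
preserving on `U` if and only if `f` is centralizing on `U`. -/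
theorem endo_scp_iff_centralizing_on_lie_ideal (R : Type*) [Ring R]
    (h2 : ∀ x : R, x + x = 0 → x = 0)
    (hsp : ∀ a : R, (∀ r : R, a * r * a = 0) → a = 0)
    (U : AddSubgroup R)
    (hLie : ∀ u ∈ U, ∀ r : R, u * r - r * u ∈ U)
    (hsq : ∀ u ∈ U, u * u ∈ U)
    (hne : U ≠ ⊥)
    (f : R →+* R)
    (hfU : f '' (U : Set R) = (U : Set R)) :
    (∀ x ∈ U, ∀ y ∈ U, f x * f y - f y * f x = x * y - y * x) ↔
      (∀ x ∈ U, ∀ r : R, r * (f x * x - x * f x) = (f x * x - x * f x) * r) := by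
  -- basic membership facts
  have hfmem : ∀ x ∈ U, f x ∈ U := by
    intro x hx
    have hmem : f x ∈ f '' (U : Set R) := ⟨x, hx, rfl⟩
    rwa [hfU] at hmem
  have hsurj : ∀ u ∈ U, ∃ x ∈ U, f x = u := by
    intro u hu
    have hmem : u ∈ f '' (U : Set R) := by rw [hfU]; exact hu
    obtain ⟨x, hx, hfx⟩ := hmem
    exact ⟨x, hx, hfx⟩
  have htwo : ∀ u ∈ U, ∀ v ∈ U, u * v + u * v ∈ U := by
    intro u hu v hv
    have h1 : (u + v) * (u + v) ∈ U := hsq _ (U.add_mem hu hv)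
    have h4 : u * v - v * u ∈ U := hLie u hu v
    have key : u * v + u * v = ((u + v) * (u + v) - u * u - v * v) + (u * v - v * u) := by
      noncomm_ring
    rw [key]
    exact U.add_mem (U.sub_mem (U.sub_mem h1 (hsq u hu)) (hsq v hv)) h4
  -- Key semiprimeness lemma: if a ∈ U and a * u * a = 0 for all u ∈ U, then a = 0.
  have lemB : ∀ a ∈ U, (∀ u ∈ U, a * u * a = 0) → a = 0 := by
    intro a ha h
    have ha3 : a * a * a = 0 := h a ha
    have hE1 : ∀ t : R, a * a * t * a = a * t * a * a := by
      intro t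
      have h0 : a * (a * t - t * a) * a = 0 := h _ (hLie a ha t)
      have key : a * a * t * a - a * t * a * a = a * (a * t - t * a) * a := by noncomm_ring
      exact sub_eq_zero.mp (key.trans h0)
    have hT : ∀ r s : R, a * ((a * r - r * a) * (a * s - s * a)) * a = 0 := by
      intro r s
      have hm : (a * r - r * a) * (a * s - s * a) + (a * r - r * a) * (a * s - s * a) ∈ U :=
        htwo _ (hLie a ha r) _ (hLie a ha s)
      have h0 := h _ hm
      apply h2
      have key : a * ((a * r - r * a) * (a * s - s * a)) * a
            + a * ((a * r - r * a) * (a * s - s * a)) * a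
          = a * ((a * r - r * a) * (a * s - s * a) + (a * r - r * a) * (a * s - s * a)) * a := by
        noncomm_ring
      rw [key]
      exact h0
    have hT2 : ∀ r s : R, a * r * a * s * (a * a) = a * a * r * s * (a * a) := by
      intro r s
      have e1 : a * a * r * a * s * a = a * r * a * s * a * a := by
        calc a * a * r * a * s * a = a * a * (r * a * s) * a := by noncomm_ring
          _ = a * (r * a * s) * a * a := hE1 _
          _ = a * r * a * s * a * a := by noncomm_ring
      have e3 : a * r * a * a * s * a = a * r * a * s * a * a := by
        calc a * r * a * a * s * a = a * r * (a * a * s * a) := by noncomm_ring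
          _ = a * r * (a * s * a * a) := by rw [hE1 s]
          _ = a * r * a * s * a * a := by noncomm_ring
      have key : a * r * a * s * (a * a) - a * a * r * s * (a * a)
          = a * ((a * r - r * a) * (a * s - s * a)) * a
            - (a * a * r * a * s * a - a * r * a * s * a * a)
            + (a * r * a * a * s * a - a * r * a * s * a * a) := by noncomm_ring
      rw [hT r s, e1, e3] at key
      simp only [sub_self, zero_sub, add_zero, neg_zero, sub_zero] at key
      exact sub_eq_zero.mp key
    have ha2 : a * a = 0 := by
      apply hsp
      intro r
      have h' := hT2 r 1
      have eL : a * r * a * 1 * (a * a) = a * r * (a * a * a) := by noncomm_ring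
      have eR : a * a * r * 1 * (a * a) = a * a * r * (a * a) := by noncomm_ring
      rw [eL, ha3, eR] at h'
      have : a * a * r * (a * a) = 0 := by rw [← h']; simp
      calc a * a * r * (a * a) = a * a * r * (a * a) := rfl
        _ = 0 := this
    have hP : ∀ r s : R, a * r * a * s * a + a * s * a * r * a = 0 := by
      intro r s
      have hu0 : a * ((a * r - r * a) * s - s * (a * r - r * a)) * a = 0 :=
        h _ (hLie _ (hLie a ha r) s)
      have key : a * r * a * s * a + a * s * a * r * a
          = (a * a) * (r * s * a) + a * s * r * (a * a)
            - a * ((a * r - r * a) * s - s * (a * r - r * a)) * a := by noncomm_ring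
      rw [ha2, hu0] at key
      simpa using key
    have h6 : ∀ r : R, a * r * a * r * a = 0 := fun r => h2 _ (hP r r)
    have h7 : ∀ r : R, a * r * a = 0 := by
      intro r
      apply hsp
      intro s
      have e : (a * r * a) * s * (a * r * a)
          = a * r * (a * s * a * r * a + a * r * a * s * a) - (a * r * a * r * a) * (s * a) := by
        noncomm_ring
      rw [hP s r, h6 r] at e
      simpa using e
    exact hsp a h7
  constructor
  · -- SCP → centralizing (in fact commuting)
    intro hscp x hx r
    have hfx := hfmem x hx
    have hu : f x - x ∈ U := U.sub_mem hfx hx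
    -- left annihilation: (f x - x) * (x*y - y*x) = 0 for y ∈ U
    have h1' : ∀ y ∈ U, (f x - x) * (x * y - y * x) = 0 := by
      intro y hy
      have ht : x * y + x * y ∈ U := htwo x hx y hy
      have e := hscp x hx _ ht
      rw [map_add, map_mul] at e
      have e' := hscp x hx y hy
      apply h2
      have key : (f x - x) * (x * y - y * x) + (f x - x) * (x * y - y * x)
          = (f x * (f x * f y + f x * f y) - (f x * f y + f x * f y) * f x
              - (x * (x * y + x * y) - (x * y + x * y) * x))
            - f x * (f x * f y - f y * f x - (x * y - y * x))
            - f x * (f x * f y - f y * f x - (x * y - y * x)) := by noncomm_ring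
      rw [key, sub_eq_zero_of_eq e, sub_eq_zero_of_eq e']
      simp
    -- u * y₁ * (x*y₂ - y₂*x) = 0
    have hN1 : ∀ y₁ ∈ U, ∀ y₂ ∈ U, (f x - x) * y₁ * (x * y₂ - y₂ * x) = 0 := by
      intro y₁ hy₁ y₂ hy₂
      have hT := h1' _ (htwo y₁ hy₁ y₂ hy₂)
      have hA := h1' y₁ hy₁
      apply h2
      have key : (f x - x) * y₁ * (x * y₂ - y₂ * x) + (f x - x) * y₁ * (x * y₂ - y₂ * x)
          = (f x - x) * (x * (y₁ * y₂ + y₁ * y₂) - (y₁ * y₂ + y₁ * y₂) * x)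
            - ((f x - x) * (x * y₁ - y₁ * x) * y₂ + (f x - x) * (x * y₁ - y₁ * x) * y₂) := by
        noncomm_ring
      rw [key, hT, hA]
      simp
    set m : R := x * (f x - x) - (f x - x) * x with hm_def
    have hmU : m ∈ U := by
      have key : m = -((f x - x) * x - x * (f x - x)) := by rw [hm_def]; noncomm_ring
      rw [key]
      exact U.neg_mem (hLie _ hu x)
    have hmUm : ∀ t ∈ U, m * t * m = 0 := by
      intro t ht
      have e1 : (f x - x) * t * (x * (f x - x) - (f x - x) * x) = 0 := hN1 t ht _ hu
      have e2 : (f x - x) * (x * t) * (x * (f x - x) - (f x - x) * x) = 0 := by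
        apply h2
        have e2pre := hN1 _ (htwo x hx t ht) _ hu
        have key : (f x - x) * (x * t) * (x * (f x - x) - (f x - x) * x)
              + (f x - x) * (x * t) * (x * (f x - x) - (f x - x) * x)
            = (f x - x) * (x * t + x * t) * (x * (f x - x) - (f x - x) * x) := by noncomm_ring
        rw [key]
        exact e2pre
      have key : m * t * m
          = x * ((f x - x) * t * (x * (f x - x) - (f x - x) * x))
            - (f x - x) * (x * t) * (x * (f x - x) - (f x - x) * x) := by
        rw [hm_def]; noncomm_ring
      rw [key, e1, e2]
      simp
    have hm0 : m = 0 := lemB m hmU hmUm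
    have c0 : f x * x - x * f x = 0 := by
      have key : f x * x - x * f x = -m := by rw [hm_def]; noncomm_ring
      rw [key, hm0, neg_zero]
    rw [c0, mul_zero, zero_mul]
  · -- centralizing → SCP
    intro hc x hx y hy
    -- Step 1: f is commuting on U
    have hcomm : ∀ z ∈ U, f z * z = z * f z := by
      intro z hz
      have hz2 : z * z ∈ U := hsq z hz
      have h₂ : ∀ r : R, r * (f z * z - z * f z) = (f z * z - z * f z) * r := hc z hz
      have h₃ : ∀ r : R, r * ((f z * f z) * (z * z) - (z * z) * (f z * f z))
          = ((f z * f z) * (z * z) - (z * z) * (f z * f z)) * r := by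
        intro r
        have := hc _ hz2 r
        rwa [map_mul] at this
      have h₁₂ : ∀ r : R,
          r * ((f z + f z * f z) * (z + z * z) - (z + z * z) * (f z + f z * f z))
          = ((f z + f z * f z) * (z + z * z) - (z + z * z) * (f z + f z * f z)) * r := by
        intro r
        have := hc _ (U.add_mem hz hz2) r
        rwa [map_add, map_mul] at this
      have hcc : (f z * z - z * f z) * (f z * z - z * f z) = 0 := by
        apply h2
        have e₁ : f z * ((f z + f z * f z) * (z + z * z) - (z + z * z) * (f z + f z * f z))
            - ((f z + f z * f z) * (z + z * z) - (z + z * z) * (f z + f z * f z)) * f z = 0 :=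
          sub_eq_zero_of_eq (h₁₂ (f z))
        have e₂ : f z * (f z * z - z * f z) - (f z * z - z * f z) * f z = 0 :=
          sub_eq_zero_of_eq (h₂ (f z))
        have e₃ : f z * ((f z * f z) * (z * z) - (z * z) * (f z * f z))
            - ((f z * f z) * (z * z) - (z * z) * (f z * f z)) * f z = 0 :=
          sub_eq_zero_of_eq (h₃ (f z))
        have e₄ : (f z * z) * (f z * z - z * f z) - (f z * z - z * f z) * (f z * z) = 0 :=
          sub_eq_zero_of_eq (h₂ (f z * z))
        have e₅ : (f z * f z) * (f z * z - z * f z) - (f z * z - z * f z) * (f z * f z) = 0 :=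
          sub_eq_zero_of_eq (h₂ (f z * f z))
        have e₆ : z * (f z * z - z * f z) - (f z * z - z * f z) * z = 0 :=
          sub_eq_zero_of_eq (h₂ z)
        have key : (f z * z - z * f z) * (f z * z - z * f z)
              + (f z * z - z * f z) * (f z * z - z * f z)
            = (f z * ((f z + f z * f z) * (z + z * z) - (z + z * z) * (f z + f z * f z))
                - ((f z + f z * f z) * (z + z * z) - (z + z * z) * (f z + f z * f z)) * f z)
              - (f z * (f z * z - z * f z) - (f z * z - z * f z) * f z)
              - (f z * ((f z * f z) * (z * z) - (z * z) * (f z * f z))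
                - ((f z * f z) * (z * z) - (z * z) * (f z * f z)) * f z)
              - ((f z * z) * (f z * z - z * f z) - (f z * z - z * f z) * (f z * z))
              - (f z * (f z * z - z * f z) - (f z * z - z * f z) * f z) * z
              - ((f z * f z) * (f z * z - z * f z) - (f z * z - z * f z) * (f z * f z))
              + (z * (f z * z - z * f z) - (f z * z - z * f z) * z) * f z := by noncomm_ring
        rw [e₁, e₂, e₃, e₄, e₅, e₆] at key
        simpa using key
      have hc0 : f z * z - z * f z = 0 := by
        apply hsp
        intro r
        calc (f z * z - z * f z) * r * (f z * z - z * f z)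
            = (f z * z - z * f z) * (r * (f z * z - z * f z)) := by rw [mul_assoc]
          _ = (f z * z - z * f z) * ((f z * z - z * f z) * r) := by rw [h₂ r]
          _ = (f z * z - z * f z) * (f z * z - z * f z) * r := by rw [mul_assoc]
          _ = 0 := by rw [hcc, zero_mul]
      exact sub_eq_zero.mp hc0
    -- Step 2: [f a, b] = [a, f b] on U
    have hdag : ∀ a ∈ U, ∀ b ∈ U, f a * b - b * f a = a * f b - f b * a := by
      intro a ha b hb
      have h1 := hcomm _ (U.add_mem ha hb)
      rw [map_add] at h1
      have h2a := hcomm a ha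
      have h2b := hcomm b hb
      have key : f a * b - b * f a - (a * f b - f b * a)
          = ((f a + f b) * (a + b) - (a + b) * (f a + f b))
            - (f a * a - a * f a) - (f b * b - b * f b) := by noncomm_ring
      rw [sub_eq_zero_of_eq h1, sub_eq_zero_of_eq h2a, sub_eq_zero_of_eq h2b] at key
      have key' : f a * b - b * f a - (a * f b - f b * a) = 0 := by simpa using key
      exact sub_eq_zero.mp key'
    -- Step 3: (f b - b)*[f a, d] + [f a, b]*(f d - d) = 0
    have hstar : ∀ a ∈ U, ∀ b ∈ U, ∀ d ∈ U,
        (f b - b) * (f a * d - d * f a) + (f a * b - b * f a) * (f d - d) = 0 := by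
      intro a ha b hb d hd
      have hT := hdag a ha _ (htwo b hb d hd)
      rw [map_add, map_mul] at hT
      have hB := hdag a ha b hb
      have hC := hdag a ha d hd
      apply h2
      have key : ((f b - b) * (f a * d - d * f a) + (f a * b - b * f a) * (f d - d))
            + ((f b - b) * (f a * d - d * f a) + (f a * b - b * f a) * (f d - d))
          = f b * (f a * d - d * f a - (a * f d - f d * a))
            + f b * (f a * d - d * f a - (a * f d - f d * a))
            + (f a * b - b * f a - (a * f b - f b * a)) * f d
            + (f a * b - b * f a - (a * f b - f b * a)) * f d
            - (f a * (b * d + b * d) - (b * d + b * d) * f a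
              - (a * (f b * f d + f b * f d) - (f b * f d + f b * f d) * a)) := by noncomm_ring
      rw [key, sub_eq_zero_of_eq hT, sub_eq_zero_of_eq hB, sub_eq_zero_of_eq hC]
      simp
    -- Step 4: (f b - b)*[u, d] + [u, b]*(f d - d) = 0 for all u ∈ U
    have hII : ∀ u ∈ U, ∀ b ∈ U, ∀ d ∈ U,
        (f b - b) * (u * d - d * u) + (u * b - b * u) * (f d - d) = 0 := by
      intro u hu b hb d hd
      obtain ⟨a, ha, rfl⟩ := hsurj u hu
      exact hstar a ha b hb d hd
    -- commuting helper
    have hgc : ∀ b ∈ U, (f b - b) * b - b * (f b - b) = 0 := by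
      intro b hb
      have key : (f b - b) * b - b * (f b - b) = f b * b - b * f b := by noncomm_ring
      rw [key]
      exact sub_eq_zero_of_eq (hcomm b hb)
    -- Step 5
    have hIV : ∀ b ∈ U, ∀ d ∈ U, (f b - b) * ((f b - b) * d - d * (f b - b)) = 0 := by
      intro b hb d hd
      have hg : f b - b ∈ U := U.sub_mem (hfmem b hb) hb
      have h0 := hII _ hg b hb d hd
      rw [hgc b hb] at h0
      simpa using h0
    -- Step 6: f b - b commutes with U
    have hgz : ∀ b ∈ U, ∀ d ∈ U, (f b - b) * d = d * (f b - b) := by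
      intro b hb d hd
      have hg : f b - b ∈ U := U.sub_mem (hfmem b hb) hb
      -- N1 for w := f b - b
      have hN1 : ∀ t ∈ U, ∀ s ∈ U, (f b - b) * t * ((f b - b) * s - s * (f b - b)) = 0 := by
        intro t ht s hs
        have hT := hIV b hb _ (htwo t ht s hs)
        have hA := hIV b hb t ht
        apply h2
        have key : (f b - b) * t * ((f b - b) * s - s * (f b - b))
              + (f b - b) * t * ((f b - b) * s - s * (f b - b))
            = (f b - b) * ((f b - b) * (t * s + t * s) - (t * s + t * s) * (f b - b))
              - ((f b - b) * ((f b - b) * t - t * (f b - b)) * s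
                + (f b - b) * ((f b - b) * t - t * (f b - b)) * s) := by noncomm_ring
        rw [key, hT, hA]
        simp
      set a : R := (f b - b) * d - d * (f b - b) with ha_def
      have haU : a ∈ U := hLie _ hg d
      have haUa : ∀ t ∈ U, a * t * a = 0 := by
        intro t ht
        have e1 : (f b - b) * t * ((f b - b) * d - d * (f b - b)) = 0 := hN1 t ht d hd
        have e2 : (f b - b) * (d * t) * ((f b - b) * d - d * (f b - b)) = 0 := by
          apply h2
          have e2pre := hN1 _ (htwo d hd t ht) d hd
          have key : (f b - b) * (d * t) * ((f b - b) * d - d * (f b - b))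
                + (f b - b) * (d * t) * ((f b - b) * d - d * (f b - b))
              = (f b - b) * (d * t + d * t) * ((f b - b) * d - d * (f b - b)) := by noncomm_ring
          rw [key]
          exact e2pre
        have key : a * t * a
            = (f b - b) * (d * t) * ((f b - b) * d - d * (f b - b))
              - d * ((f b - b) * t * ((f b - b) * d - d * (f b - b))) := by
          rw [ha_def]; noncomm_ring
        rw [key, e1, e2]
        simp
      have ha0 : a = 0 := lemB a haU haUa
      rw [ha_def] at ha0
      exact sub_eq_zero.mp ha0
    -- conclude
    have k1 : (f x - x) * f y = f y * (f x - x) := hgz x hx (f y) (hfmem y hy)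
    have k2 : (f y - y) * x = x * (f y - y) := hgz y hy x hx
    have key : f x * f y - f y * f x - (x * y - y * x)
        = ((f x - x) * f y - f y * (f x - x)) + (x * (f y - y) - (f y - y) * x) := by
      noncomm_ring
    rw [sub_eq_zero_of_eq k1, sub_eq_zero_of_eq k2.symm] at key
    have key' : f x * f y - f y * f x - (x * y - y * x) = 0 := by simpa using key
    exact sub_eq_zero.mp key'
end

section
/- Let R be a 2-torsion free semiprime ring, U a nonzero square closed Lie ideal of R, and f an endomorphism of R such that f(U) ⊆ U. If f is strong commutativity preserving on U, then f is commuting on U, i.e., [f(x),x] = 0 for all x ∈ U. -/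
/-- Pure algebraic key lemma: if `a ∈ U` satisfies `a * [x,y] = 0` for all `y ∈ U`,
with `x ∈ U`, `U` a Lie ideal closed under `y*z + y*z`, in a 2-torsion free semiprime
ring, then `[a,x] = 0`. -/
theorem endo_scp_key {R : Type*} [Ring R]
    (h2 : ∀ z : R, z + z = 0 → z = 0)
    (hsp : ∀ b : R, (∀ r : R, b * r * b = 0) → b = 0)
    (U : AddSubgroup R)
    (hLie : ∀ u ∈ U, ∀ r : R, u * r - r * u ∈ U)
    (hUU : ∀ y ∈ U, ∀ z ∈ U, y * z + y * z ∈ U)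
    (x a : R) (hx : x ∈ U) (ha : a ∈ U)
    (h1 : ∀ y ∈ U, a * (x * y - y * x) = 0) :
    a * x - x * a = 0 := by
  set c := a * x - x * a with hc_def
  have hcU : c ∈ U := by rw [hc_def]; exact hLie a ha x
  -- h3 : a * y * [x,z] = 0 for y, z ∈ U
  have h3 : ∀ y ∈ U, ∀ z ∈ U, a * y * (x * z - z * x) = 0 := by
    intro y hy z hz
    have e := h1 (y * z + y * z) (hUU y hy z hz)
    have e' := h1 y hy
    have hid : a * y * (x * z - z * x) + a * y * (x * z - z * x) =
        (a * (x * (y * z + y * z) - (y * z + y * z) * x)) -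
          (a * (x * y - y * x) * z + a * (x * y - y * x) * z) := by noncomm_ring
    have h0 : a * y * (x * z - z * x) + a * y * (x * z - z * x) = 0 := by
      rw [hid, e, e']; simp
    exact h2 _ h0
  -- h4 : a * c = 0
  have h4 : a * c = 0 := by
    have e := h1 a ha
    have hid : a * c = -(a * (x * a - a * x)) := by rw [hc_def]; noncomm_ring
    rw [hid, e, neg_zero]
  -- h7 : a * y * c = 0 for y ∈ U
  have h7 : ∀ y ∈ U, a * y * c = 0 := by
    intro y hy
    have e := h3 y hy a ha
    have hid : a * y * c = -(a * y * (x * a - a * x)) := by rw [hc_def]; noncomm_ring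
    rw [hid, e, neg_zero]
  -- h6 : a * [x,r] * c = 0 for all r
  have h6 : ∀ r : R, a * (x * r - r * x) * c = 0 := by
    intro r
    have e := h3 (x * r - r * x) (hLie x hx r) a ha
    have hid : a * (x * r - r * x) * c = -(a * (x * r - r * x) * (x * a - a * x)) := by
      rw [hc_def]; noncomm_ring
    rw [hid, e, neg_zero]
  -- h8 : c * y * c = 0 for y ∈ U
  have h8 : ∀ y ∈ U, c * y * c = 0 := by
    intro y hy
    have e1 := h6 y
    have e2 := h3 y hy c hcU
    have e3 := h7 y hy
    have hid : c * y * c = a * (x * y - y * x) * c + a * y * (x * c - c * x)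
        + a * y * c * x - x * (a * y * c) := by rw [hc_def]; noncomm_ring
    rw [hid, e1, e2, e3]; simp
  -- h9 : a * r * c² = 0 for all r
  have h9 : ∀ r : R, a * r * (c * c) = 0 := by
    intro r
    have e := h7 (c * r - r * c) (hLie c hcU r)
    have hid : a * r * (c * c) = a * c * (r * c) - a * (c * r - r * c) * c := by
      noncomm_ring
    rw [hid, h4, e]; simp
  -- h10 : c² = 0
  have h10 : c * c = 0 := by
    refine hsp _ fun r => ?_
    have hid : c * c * r * (c * c) =
        a * (x * c * r) * (c * c) - x * (a * c * (r * (c * c))) := by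
      rw [hc_def]; noncomm_ring
    rw [hid, h9 (x * c * r), h4]; simp
  -- h11 : anticommuting relation
  have h11 : ∀ m s : R, c * m * (c * s * c) + c * s * (c * m * c) = 0 := by
    intro m s
    have hy1 := hLie c hcU m
    have hy2 := hLie _ hy1 s
    have e := h8 _ hy2
    have hid : c * m * (c * s * c) + c * s * (c * m * c) =
        c * c * (m * (s * c)) + c * (s * m) * (c * c)
          - c * ((c * m - m * c) * s - s * (c * m - m * c)) * c := by noncomm_ring
    rw [hid, e, h10]; simp
  -- h12 : c r c r c = 0
  have h12 : ∀ r : R, c * r * (c * r * c) = 0 := by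
    intro r
    exact h2 _ (h11 r r)
  -- h13 : c R c = 0
  have h13 : ∀ r : R, c * r * c = 0 := by
    intro r
    refine hsp _ fun s => ?_
    have hid : c * r * c * s * (c * r * c) =
        c * r * (c * s * (c * r * c) + c * r * (c * s * c))
          - c * r * (c * r * c) * (s * c) := by noncomm_ring
    rw [hid, h11 s r, h12 r]; simp
  exact hsp c h13

/-- Let `R` be a 2-torsion free semiprime ring, `U` a nonzero square closed Lie ideal of
`R`, and `f` an endomorphism of `R` with `f(U) ⊆ U`. If `f` is strong commutativity
preserving on `U`, then `f` is commuting on `U`. -/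
theorem endo_scp_implies_commuting_on_lie_ideal (R : Type*) [Ring R]
    (h2 : ∀ x : R, x + x = 0 → x = 0)
    (hsp : ∀ a : R, (∀ r : R, a * r * a = 0) → a = 0)
    (U : AddSubgroup R)
    (hLie : ∀ u ∈ U, ∀ r : R, u * r - r * u ∈ U)
    (hsq : ∀ u ∈ U, u * u ∈ U)
    (hne : U ≠ ⊥)
    (f : R →+* R)
    (hfU : ∀ u ∈ U, f u ∈ U)
    (hscp : ∀ x ∈ U, ∀ y ∈ U, f x * f y - f y * f x = x * y - y * x) :
    ∀ x ∈ U, f x * x - x * f x = 0 := by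
  intro x hx
  have hfx : f x ∈ U := hfU x hx
  have hUU : ∀ y ∈ U, ∀ z ∈ U, y * z + y * z ∈ U := by
    intro y hy z hz
    have ha1 : (y + z) * (y + z) ∈ U := hsq _ (U.add_mem hy hz)
    have ha2 : y * z - z * y ∈ U := hLie y hy z
    have hid : y * z + y * z = ((y + z) * (y + z) - y * y - z * z) + (y * z - z * y) := by
      noncomm_ring
    rw [hid]
    exact U.add_mem (U.sub_mem (U.sub_mem ha1 (hsq y hy)) (hsq z hz)) ha2
  have h1 : ∀ y ∈ U, (f x - x) * (x * y - y * x) = 0 := by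
    intro y hy
    have hu : x * y + x * y ∈ U := hUU x hx y hy
    have e1 := hscp x hx (x * y + x * y) hu
    have e2 := hscp x hx y hy
    have hf : f (x * y + x * y) = f x * f y + f x * f y := by rw [map_add, map_mul]
    rw [hf] at e1
    have e1' : f x * (f x * f y + f x * f y) - (f x * f y + f x * f y) * f x
        - (x * (x * y + x * y) - (x * y + x * y) * x) = 0 := by rw [e1, sub_self]
    have e2' : f x * f y - f y * f x - (x * y - y * x) = 0 := by rw [e2, sub_self]
    have hid : (f x - x) * (x * y - y * x) + (f x - x) * (x * y - y * x) =
        (f x * (f x * f y + f x * f y) - (f x * f y + f x * f y) * f x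
          - (x * (x * y + x * y) - (x * y + x * y) * x))
        - (f x * (f x * f y - f y * f x - (x * y - y * x))
          + f x * (f x * f y - f y * f x - (x * y - y * x))) := by noncomm_ring
    have h0 : (f x - x) * (x * y - y * x) + (f x - x) * (x * y - y * x) = 0 := by
      rw [hid, e1', e2']; simp
    exact h2 _ h0
  have ha : f x - x ∈ U := U.sub_mem hfx hx
  have hkey := endo_scp_key h2 hsp U hLie hUU x (f x - x) hx ha h1
  have hid : f x * x - x * f x = (f x - x) * x - x * (f x - x) := by noncomm_ring
  rw [hid]
  exact hkey
end

section
/- Let R be a 2-torsion free semiprime ring and f a surjective endomorphism of R. Then f is strong commutativity preserving on R (i.e., [f(x),f(y)] = [x,y] for all x, y ∈ R) if and only if f is centralizing on R (i.e., [f(x),x] ∈ Z(R) for all x ∈ R). -/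
/-- Let `R` be a 2-torsion free semiprime ring and `f` a surjective endomorphism of `R`.
Then `f` is strong commutativity preserving if and only if `f` is centralizing. -/
theorem epi_scp_iff_centralizing (R : Type*) [Ring R]
    (h2 : ∀ x : R, x + x = 0 → x = 0)
    (hsp : ∀ a : R, (∀ r : R, a * r * a = 0) → a = 0)
    (f : R →+* R)
    (hf : Function.Surjective f) :
    (∀ x y : R, f x * f y - f y * f x = x * y - y * x) ↔
      (∀ x : R, ∀ r : R, r * (f x * x - x * f x) = (f x * x - x * f x) * r) := by
  constructor
  · -- SCP → centralizing
    intro hscp x r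
    have star : ∀ x y z : R,
        (f y - y) * (x * z - z * x) + (x * y - y * x) * (f z - z) = 0 := by
      intro x y z
      have e1 : f x * (f y * f z) - f y * f z * f x = x * (y * z) - y * z * x := by
        have h := hscp x (y * z); rwa [map_mul] at h
      have e2 := hscp x z
      have e3 := hscp x y
      linear_combination (norm := noncomm_ring) e1 - f y * e2 - e3 * f z
    have dstar : ∀ x x' y z : R,
        ((f y - y) * x - x * (f y - y)) * (x' * z - z * x')
          + (x * y - y * x) * (x' * (f z - z) - (f z - z) * x') = 0 := by
      intro x x' y z
      have h1 := star (x * x') y z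
      have h2 := star x' y z
      have h3 := star x y z
      linear_combination (norm := noncomm_ring) h1 - x * h2 - h3 * x'
    have cRight : ∀ w u v : R, (u * v - v * u) * (f w * w - w * f w) = 0 := by
      intro w u v
      have h := dstar u w v w
      linear_combination (norm := noncomm_ring) -h
    have hA : ∀ u : R,
        ((f x * x - x * f x) * u - u * (f x * x - x * f x)) * (f x * x - x * f x) = 0 :=
      fun u => cRight x (f x * x - x * f x) u
    have hB : ∀ r s : R,
        ((f x * x - x * f x) * r - r * (f x * x - x * f x)) * s * (f x * x - x * f x) = 0 := by
      intro r s
      linear_combination (norm := noncomm_ring) hA (r * s) - r * hA s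
    have ht : (f x * x - x * f x) * r - r * (f x * x - x * f x) = 0 := by
      apply hsp
      intro s
      linear_combination (norm := noncomm_ring) hB r s * r - hB r (s * r)
    linear_combination (norm := noncomm_ring) -ht
  · -- centralizing → SCP
    intro hcent
    -- Step 1: f is commuting
    have hcomm : ∀ x : R, f x * x - x * f x = 0 := by
      intro x
      have h1 := hcent x x
      have hcsq := hcent (x * x) x
      rw [map_mul] at hcsq
      have h3 := hcent (x + x * x) x
      rw [map_add, map_mul] at h3
      have hqx : x * (f x * (x * x) - (x * x) * f x + (f x * f x * x - x * (f x * f x)))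
          = (f x * (x * x) - (x * x) * f x + (f x * f x * x - x * (f x * f x))) * x := by
        linear_combination (norm := noncomm_ring) h3 - h1 - hcsq
      have hg := hcent x (f x)
      have hx := hcent x x
      have hcc2 : (f x * x - x * f x) * (f x * x - x * f x)
          + (f x * x - x * f x) * (f x * x - x * f x) = 0 := by
        linear_combination (norm := noncomm_ring)
          -hqx - hg * x + x * hg + hx * (f x) + hx * (f x) + x * hx + hx * x
      have hcc : (f x * x - x * f x) * (f x * x - x * f x) = 0 := h2 _ hcc2
      apply hsp
      intro r
      linear_combination (norm := noncomm_ring)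
        (f x * x - x * f x) * hcent x r + hcc * r
    -- Step 2: linearized commuting
    have hL : ∀ x y : R, f x * y - y * f x = x * f y - f y * x := by
      intro x y
      have h := hcomm (x + y)
      rw [map_add] at h
      linear_combination (norm := noncomm_ring) h - hcomm x - hcomm y
    -- Step 3: [x, f y] * (f x - x) = 0
    have hD : ∀ x y : R, (x * f y - f y * x) * (f x - x) = 0 := by
      intro x y
      have dag := hL x (y * x)
      rw [map_mul] at dag
      have dd := hL x y
      linear_combination (norm := noncomm_ring)
        -dag + f y * hcomm x + dd * x + y * hcomm x
    have hD' : ∀ x w : R, (x * w - w * x) * (f x - x) = 0 := by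
      intro x w
      obtain ⟨y, rfl⟩ := hf w
      exact hD x y
    -- Step 4: (y*(f x - x) - (f x - x)*y)*(f x - x) = 0
    have hF : ∀ x y : R,
        (y * (f x - x) - (f x - x) * y) * (f x - x) = 0 := by
      intro x y
      have ha := hD' (x + y) (f x - x)
      rw [map_add] at ha
      have hb := hD' x (f x - x)
      have hc' := hD' y (f x - x)
      linear_combination (norm := noncomm_ring) ha - hb - hc' + hcomm x * (f y - y)
    have hG : ∀ x y v : R,
        (y * (f x - x) - (f x - x) * y) * v * (f x - x) = 0 := by
      intro x y v
      linear_combination (norm := noncomm_ring) hF x (y * v) - y * hF x v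
    -- Step 5: f x - x is central
    have hZ : ∀ x y : R, y * (f x - x) = (f x - x) * y := by
      intro x y
      have key : y * (f x - x) - (f x - x) * y = 0 := by
        apply hsp
        intro s
        linear_combination (norm := noncomm_ring) hG x y (s * y) - hG x y s * y
      linear_combination (norm := noncomm_ring) key
    -- Conclusion
    intro x y
    have hA2 := hZ x (f y)
    have hB2 := hZ y x
    linear_combination (norm := noncomm_ring) hB2 - hA2
end

section
/- Let R be a 2-torsion free prime ring and f an automorphism of R with f ≠ id (f is nontrivial). If f is strong commutativity preserving on R (i.e., [f(x),f(y)] = [x,y] for all x, y ∈ R), then R is commutative. -/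
/-- Let `R` be a 2-torsion free prime ring and `f` a nontrivial automorphism of `R`.
If `f` is strong commutativity preserving, then `R` is commutative. -/
theorem nontrivial_aut_scp_implies_commutative (R : Type*) [Ring R]
    (h2 : ∀ x : R, x + x = 0 → x = 0)
    (hpr : ∀ a b : R, (∀ r : R, a * r * b = 0) → a = 0 ∨ b = 0)
    (f : R ≃+* R)
    (hf : f ≠ RingEquiv.refl R)
    (hscp : ∀ x y : R, f x * f y - f y * f x = x * y - y * x) :
    ∀ x y : R, x * y = y * x := by
  -- f fixes every commutator
  have ffix : ∀ x y : R, f (x * y - y * x) = x * y - y * x := by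
    intro x y
    rw [map_sub, map_mul, map_mul]
    exact hscp x y
  -- [x,y] * (f x - x) = 0
  have P0 : ∀ x y : R, (x * y - y * x) * (f x - x) = 0 := by
    intro x y
    have h1 := ffix x (y * x)
    have hh : f (x * (y * x) - (y * x) * x) = (f x * f y - f y * f x) * f x := by
      simp only [map_sub, map_mul]; noncomm_ring
    rw [hscp] at hh
    rw [hh] at h1
    have : (x * y - y * x) * (f x - x) =
        (x * y - y * x) * f x - (x * (y * x) - (y * x) * x) := by noncomm_ring
    rw [this, h1, sub_self]
  -- linearized version
  have P1 : ∀ x w y : R,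
      (x * y - y * x) * (f w - w) + (w * y - y * w) * (f x - x) = 0 := by
    intro x w y
    have h := P0 (x + w) y
    rw [map_add] at h
    have e : ((x + w) * y - y * (x + w)) * (f x + f w - (x + w)) =
        (x * y - y * x) * (f x - x) + (w * y - y * w) * (f w - w) +
        ((x * y - y * x) * (f w - w) + (w * y - y * w) * (f x - x)) := by noncomm_ring
    rw [e, P0 x y, P0 w y] at h
    simpa using h
  -- with an arbitrary middle factor
  have P2 : ∀ x w y s : R,
      (x * y - y * x) * s * (f w - w) + (w * y - y * w) * s * (f x - x) = 0 := by
    intro x w y s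
    have h := P1 x w (y * s)
    have e : (x * (y * s) - (y * s) * x) * (f w - w) +
        (w * (y * s) - (y * s) * w) * (f x - x) =
        ((x * y - y * x) * s * (f w - w) + (w * y - y * w) * s * (f x - x)) +
        y * ((x * s - s * x) * (f w - w) + (w * s - s * w) * (f x - x)) := by noncomm_ring
    rw [e, P1 x w s, mul_zero, add_zero] at h
    exact h
  -- key dichotomy
  have key : ∀ x y : R, x * y = y * x ∨ f x = x := by
    intro x y
    have hs : ∀ s : R, (x * y - y * x) * s * (f x - x) = 0 := by
      intro s
      have h := P2 x x y s
      exact h2 _ h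
    rcases hpr _ _ hs with h | h
    · left; exact sub_eq_zero.mp h
    · right; exact sub_eq_zero.mp h
  -- f is nontrivial: get a with f a ≠ a
  have ⟨a, ha⟩ : ∃ a : R, f a ≠ a := by
    by_contra hc
    push_neg at hc
    exact hf (RingEquiv.ext hc)
  have haz : ∀ y : R, a * y = y * a := fun y => (key a y).resolve_right ha
  intro x y
  rcases key x y with h | hx
  · exact h
  rcases key (x + a) y with h | h
  · have := haz y
    rw [add_mul, mul_add] at h
    -- h : x*y + a*y = y*x + y*a
    have := h
    rw [haz y] at this
    exact add_right_cancel this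
  · rw [map_add, hx] at h
    exact absurd (add_left_cancel h) ha
end

section
/- Let R be a 2-torsion free semiprime ring, U a square closed Lie ideal of R, and f an antihomomorphism of R such that f(U) = U. Then f is centralizing on U (i.e., [f(x),x] ∈ Z(R) for all x ∈ U) if and only if f is strong commutativity preserving on U (i.e., [f(x),f(y)] = [x,y] for all x, y ∈ U). -/
/-- Let `R` be a 2-torsion free semiprime ring, `U` a square closed Lie ideal of `R`,
and `f` an antihomomorphism of `R` with `f(U) = U`. Then `f` is centralizing on `U`
if and only if `f` is strong commutativity preserving on `U`. -/
theorem antihom_centralizing_iff_scp_on_lie_ideal (R : Type*) [Ring R]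
    (h2 : ∀ x : R, x + x = 0 → x = 0)
    (hsp : ∀ a : R, (∀ r : R, a * r * a = 0) → a = 0)
    (U : AddSubgroup R)
    (hLie : ∀ u ∈ U, ∀ r : R, u * r - r * u ∈ U)
    (hsq : ∀ u ∈ U, u * u ∈ U)
    (f : R → R)
    (hadd : ∀ x y : R, f (x + y) = f x + f y)
    (hanti : ∀ x y : R, f (x * y) = f y * f x)
    (hfU : f '' (U : Set R) = (U : Set R)) :
    (∀ x ∈ U, ∀ r : R, r * (f x * x - x * f x) = (f x * x - x * f x) * r) ↔
      (∀ x ∈ U, ∀ y ∈ U, f x * f y - f y * f x = x * y - y * x) := by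
  have hhalf : ∀ a b : R, a + a = b + b → a = b := fun a b hab =>
    sub_eq_zero.mp (h2 (a - b) (by linear_combination (norm := noncomm_ring) hab))
  have hmemf : ∀ x, x ∈ U → f x ∈ U := by
    intro x hx
    have : f x ∈ f '' (U : Set R) := ⟨x, hx, rfl⟩
    rw [hfU] at this
    exact this
  have hsurj : ∀ y, y ∈ U → ∃ x, x ∈ U ∧ f x = y := by
    intro y hy
    have : y ∈ f '' (U : Set R) := by rw [hfU]; exact hy
    obtain ⟨x, hx, hxy⟩ := this
    exact ⟨x, hx, hxy⟩
  have hU2 : ∀ u, u ∈ U → ∀ v, v ∈ U → u * v + u * v ∈ U := by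
    intro u hu v hv
    have m1 : u * v + v * u ∈ U := by
      have e : u * v + v * u = (u + v) * (u + v) - u * u - v * v := by noncomm_ring
      rw [e]
      exact sub_mem (sub_mem (hsq _ (add_mem hu hv)) (hsq u hu)) (hsq v hv)
    have m2 : u * v - v * u ∈ U := hLie u hu v
    have e2 : u * v + u * v = (u * v + v * u) + (u * v - v * u) := by noncomm_ring
    rw [e2]
    exact add_mem m1 m2
  constructor
  · -- centralizing → SCP
    intro hc x hx y hy
    -- Step 1: f is commuting on U
    have hcomm : ∀ u, u ∈ U → f u * u = u * f u := by
      intro u hu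
      have hcZ := hc u hu
      have huu : u * u ∈ U := hsq u hu
      have hQ : ∀ r : R, r * (f u * (u * u) - (u * u) * f u +
            ((f u * f u) * u - u * (f u * f u)))
          = (f u * (u * u) - (u * u) * f u + ((f u * f u) * u - u * (f u * f u))) * r := by
        intro r
        have e1 := hc (u + u * u) (add_mem hu huu) r
        have hfuu : f (u + u * u) = f u + f u * f u := by rw [hadd, hanti]
        rw [hfuu] at e1
        have e2 := hcZ r
        have e3 := hc (u * u) huu r
        have hfu2 : f (u * u) = f u * f u := hanti u u
        rw [hfu2] at e3
        linear_combination (norm := noncomm_ring) e1 - e2 - e3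
      have hzZ : ∀ r : R, r * ((f u * u - u * f u) * u + (f u * u - u * f u) * f u)
          = ((f u * u - u * f u) * u + (f u * u - u * f u) * f u) * r := by
        intro r
        have eu := hcZ u
        have ef := hcZ (f u)
        refine hhalf _ _ ?_
        linear_combination (norm := noncomm_ring) hQ r - r * eu + eu * r - r * ef + ef * r
      have hcc : (f u * u - u * f u) * (f u * u - u * f u) = 0 := by
        have ezu := hzZ u
        have eu := hcZ u
        linear_combination (norm := noncomm_ring) eu * (u + f u) - ezu
      have hz : f u * u - u * f u = 0 := by
        refine hsp _ (fun r => ?_)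
        have er := hcZ r
        linear_combination (norm := noncomm_ring) (f u * u - u * f u) * er + hcc * r
      exact sub_eq_zero.mp hz
    -- Step 2: linearized commuting
    have hL : ∀ u, u ∈ U → ∀ v, v ∈ U →
        (f u * v - v * f u) + (f v * u - u * f v) = 0 := by
      intro u hu v hv
      have h1 := hcomm (u + v) (add_mem hu hv)
      rw [hadd] at h1
      linear_combination (norm := noncomm_ring) h1 - hcomm u hu - hcomm v hv
    -- Step 3: the basic identity (E)
    have hE : ∀ u, u ∈ U → ∀ v, v ∈ U → ∀ w, w ∈ U →
        v * (f u * w - w * f u) + (f u * v - v * f u) * w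
          - f w * (f u * v - v * f u) - (f u * w - w * f u) * f v = 0 := by
      intro u hu v hv w hw
      have hb := hL u hu (v * w + v * w) (hU2 v hv w hw)
      have hf2 : f (v * w + v * w) = f w * f v + f w * f v := by rw [hadd, hanti]
      rw [hf2] at hb
      have e1 := hL u hu v hv
      have e2 := hL u hu w hw
      refine hhalf _ _ ?_
      linear_combination (norm := noncomm_ring) hb - f w * e1 - f w * e1 - e2 * f v - e2 * f v
    have hF : ∀ u, u ∈ U → ∀ v, v ∈ U →
        f u * (f u * v - v * f u) - (f u * v - v * f u) * u = 0 := by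
      intro u hu v hv
      have e := hE u hu v hv u hu
      have hcu := hcomm u hu
      linear_combination (norm := noncomm_ring) -e + v * hcu - hcu * f v
    have hG : ∀ u, u ∈ U → ∀ w, w ∈ U →
        u * (f u * w - w * f u) - (f u * w - w * f u) * f u = 0 := by
      intro u hu w hw
      have e := hE u hu u hu w hw
      have hcu := hcomm u hu
      linear_combination (norm := noncomm_ring) e - hcu * w + f w * hcu
    -- Step 4: the annihilation relations
    have hstar1 : ∀ u, u ∈ U → ∀ w1, w1 ∈ U → ∀ w2, w2 ∈ U →
        (f u * w1 - w1 * f u) * ((u + f u) * w2 - w2 * (u + f u)) = 0 := by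
      intro u hu w1 hw1 w2 hw2
      have h12 := hF u hu (w1 * w2 + w1 * w2) (hU2 w1 hw1 w2 hw2)
      have e1 := hF u hu w1 hw1
      have e2 := hF u hu w2 hw2
      refine hhalf _ _ ?_
      linear_combination (norm := noncomm_ring) h12 - e1 * w2 - e1 * w2 - w1 * e2 - w1 * e2
    have hstar2 : ∀ u, u ∈ U → ∀ w1, w1 ∈ U → ∀ w2, w2 ∈ U →
        ((u + f u) * w1 - w1 * (u + f u)) * (f u * w2 - w2 * f u) = 0 := by
      intro u hu w1 hw1 w2 hw2
      have h12 := hG u hu (w1 * w2 + w1 * w2) (hU2 w1 hw1 w2 hw2)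
      have e1 := hG u hu w1 hw1
      have e2 := hG u hu w2 hw2
      refine hhalf _ _ ?_
      linear_combination (norm := noncomm_ring) h12 - e1 * w2 - e1 * w2 - w1 * e2 - w1 * e2
    -- Step 5: preimages and the element Δ
    obtain ⟨x₀, hx₀, hfx₀⟩ := hsurj x hx
    obtain ⟨y₀, hy₀, hfy₀⟩ := hsurj y hy
    have hfxU := hmemf x hx
    have hfyU := hmemf y hy
    have hffxU := hmemf _ hfxU
    have hDfy : ∀ w, w ∈ U →
        ((f x * f y - f y * f x) - (x * y - y * x)) * (f y * w - w * f y) = 0 := by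
      intro w hw
      have h5 := hstar2 y hy (f x - x) (sub_mem hfxU hx) w hw
      have h6 := hL x hx y hy
      linear_combination (norm := noncomm_ring) -h5 - h6 * (f y * w - w * f y)
    have hDsy : ∀ w, w ∈ U →
        ((f x * f y - f y * f x) - (x * y - y * x)) * ((y + f y) * w - w * (y + f y)) = 0 := by
      intro w hw
      have h5 := hstar1 y hy (x₀ - f x) (sub_mem hx₀ hfxU) w hw
      have h6 := hL y hy x₀ hx₀
      rw [hfx₀] at h6
      linear_combination (norm := noncomm_ring) h5 - h6 * ((y + f y) * w - w * (y + f y))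
    have hDy : ∀ w, w ∈ U →
        ((f x * f y - f y * f x) - (x * y - y * x)) * (y * w - w * y) = 0 := by
      intro w hw
      linear_combination (norm := noncomm_ring) hDsy w hw - hDfy w hw
    have hDsy0 : ∀ w, w ∈ U →
        ((f x * f y - f y * f x) - (x * y - y * x)) * ((y₀ + y) * w - w * (y₀ + y)) = 0 := by
      intro w hw
      have h5 := hstar1 y₀ hy₀ (x - f (f x)) (sub_mem hx hffxU) w hw
      rw [hfy₀] at h5
      have h6 := hL y hy (f x) hfxU
      linear_combination (norm := noncomm_ring) h5 - h6 * ((y₀ + y) * w - w * (y₀ + y))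
    have hDy0 : ∀ w, w ∈ U →
        ((f x * f y - f y * f x) - (x * y - y * x)) * (y₀ * w - w * y₀) = 0 := by
      intro w hw
      linear_combination (norm := noncomm_ring) hDsy0 w hw - hDy w hw
    have hDfx : ∀ w, w ∈ U →
        ((f x * f y - f y * f x) - (x * y - y * x)) * (f x * w - w * f x) = 0 := by
      intro w hw
      have h5 := hstar2 x hx (f y - y) (sub_mem hfyU hy) w hw
      have h6 := hL x hx y hy
      linear_combination (norm := noncomm_ring) h5 + h6 * (f x * w - w * f x)
    have h6' := hL x hx y₀ hy₀
    rw [hfy₀] at h6'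
    have key : ∀ r : R, ((f x * f y - f y * f x) - (x * y - y * x)) * r *
        ((f x * f y - f y * f x) - (x * y - y * x)) = 0 := by
      intro r
      have hmfx : f x * r - r * f x ∈ U := hLie (f x) hfxU r
      have hw0 : f y - y₀ ∈ U := sub_mem hfyU hy₀
      have e0 := hDfx (f y - y₀) hw0
      have e1 := hDfx ((f y - y₀) * r - r * (f y - y₀)) (hLie _ hw0 r)
      have e3 := hDfy (f x * r - r * f x) hmfx
      have e4 := hDy0 (f x * r - r * f x) hmfx
      linear_combination (norm := noncomm_ring) e0 * r - e1 + e3 - e4 +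
        ((f x * f y - f y * f x) - (x * y - y * x)) * r * h6'
    exact sub_eq_zero.mp (hsp _ key)
  · -- SCP → centralizing
    intro hscp x hx
    suffices hK : f x * x - x * f x = 0 by
      intro r; rw [hK, mul_zero, zero_mul]
    have hstar : ∀ y, y ∈ U → ∀ z, z ∈ U →
        f z * (x * y - y * x) + (x * z - z * x) * f y
          - ((x * y - y * x) * z + y * (x * z - z * x)) = 0 := by
      intro y hy z hz
      have h1 := hscp x hx (y * z + y * z) (hU2 y hy z hz)
      have hfe : f (y * z + y * z) = f z * f y + f z * f y := by rw [hadd, hanti]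
      rw [hfe] at h1
      have exy := hscp x hx y hy
      have exz := hscp x hx z hz
      refine hhalf _ _ ?_
      linear_combination (norm := noncomm_ring) h1 - f z * exy - f z * exy - exz * f y - exz * f y
    have hA : ∀ y, y ∈ U → f x * (x * y - y * x) - (x * y - y * x) * x = 0 := by
      intro y hy
      have e := hstar y hy x hx
      linear_combination (norm := noncomm_ring) e
    have hB : ∀ z, z ∈ U → (x * z - z * x) * f x - x * (x * z - z * x) = 0 := by
      intro z hz
      have e := hstar x hx z hz
      linear_combination (norm := noncomm_ring) e
    have hT1 : ∀ w1, w1 ∈ U → ∀ w2, w2 ∈ U →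
        ((f x * w1 - w1 * f x) + (x * w1 - w1 * x)) * (x * w2 - w2 * x) = 0 := by
      intro w1 hw1 w2 hw2
      have h12 := hA (w1 * w2 + w1 * w2) (hU2 w1 hw1 w2 hw2)
      have e1 := hA w1 hw1
      have e2 := hA w2 hw2
      refine hhalf _ _ ?_
      linear_combination (norm := noncomm_ring) h12 - e1 * w2 - e1 * w2 - w1 * e2 - w1 * e2
    have hT2 : ∀ w1, w1 ∈ U → ∀ w2, w2 ∈ U →
        (x * w1 - w1 * x) * ((x * w2 - w2 * x) + (f x * w2 - w2 * f x)) = 0 := by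
      intro w1 hw1 w2 hw2
      have h12 := hB (w1 * w2 + w1 * w2) (hU2 w1 hw1 w2 hw2)
      have e1 := hB w1 hw1
      have e2 := hB w2 hw2
      refine hhalf _ _ ?_
      linear_combination (norm := noncomm_ring) w1 * e2 + w1 * e2 + e1 * w2 + e1 * w2 - h12
    have hK1 : ∀ w, w ∈ U → (f x * x - x * f x) * (x * w - w * x) = 0 := by
      intro w hw
      have e := hT1 x hx w hw
      linear_combination (norm := noncomm_ring) e
    have hK2 : ∀ w, w ∈ U → (f x * x - x * f x) * ((x + f x) * w - w * (x + f x)) = 0 := by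
      intro w hw
      have e := hT2 (-f x) (neg_mem (hmemf x hx)) w hw
      linear_combination (norm := noncomm_ring) e
    have hKK : (f x * x - x * f x) * (f x * x - x * f x) = 0 := by
      have e := hK2 x hx
      linear_combination (norm := noncomm_ring) e
    refine hsp _ (fun r => ?_)
    have h3 := hK2 (x * r - r * x) (hLie x hx r)
    have h4 := hK1 ((x + f x) * r - r * (x + f x)) (hLie (x + f x) (add_mem hx (hmemf x hx)) r)
    linear_combination (norm := noncomm_ring) hKK * r - h3 + h4
end

section
/- Let R be a 2-torsion free semiprime ring and f an antihomomorphism of R onto itself (f surjective). Then f is centralizing on R (i.e., [f(x),x] ∈ Z(R) for all x ∈ R) if and only if f is strong commutativity preserving on R (i.e., [f(x),f(y)] = [x,y] for all x, y ∈ R). -/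
/-- Let `R` be a 2-torsion free semiprime ring and `f` a surjective antihomomorphism
of `R`. Then `f` is centralizing if and only if `f` is strong commutativity preserving. -/
theorem surj_antihom_centralizing_iff_scp (R : Type*) [Ring R]
    (h2 : ∀ x : R, x + x = 0 → x = 0)
    (hsp : ∀ a : R, (∀ r : R, a * r * a = 0) → a = 0)
    (f : R → R)
    (hadd : ∀ x y : R, f (x + y) = f x + f y)
    (hanti : ∀ x y : R, f (x * y) = f y * f x)
    (hf : Function.Surjective f) :
    (∀ x : R, ∀ r : R, r * (f x * x - x * f x) = (f x * x - x * f x) * r) ↔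
      (∀ x y : R, f x * f y - f y * f x = x * y - y * x) := by
  constructor
  · -- centralizing → SCP
    intro hcen
    -- linearized centralizing
    have Dcen : ∀ x y r : R, r * ((f x * y - y * f x) + (f y * x - x * f y))
        = ((f x * y - y * f x) + (f y * x - x * f y)) * r := by
      intro x y r
      have h1 := hcen (x + y) r
      rw [hadd x y] at h1
      linear_combination (norm := noncomm_ring) h1 - hcen x r - hcen y r
    -- f is commuting
    have hcom : ∀ x : R, f x * x - x * f x = 0 := by
      intro x
      have hD := Dcen x (x * x) x
      rw [hanti x x] at hD
      have key : (f x * x - x * f x) * (f x * x - x * f x)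
          + (f x * x - x * f x) * (f x * x - x * f x) = 0 := by
        linear_combination (norm := noncomm_ring)
          hcen x (x * x) + hcen x (x * f x) + hcen x x * f x - hcen x (f x) * x - hD
      have c2 := h2 _ key
      apply hsp
      intro r
      linear_combination (norm := noncomm_ring)
        (f x * x - x * f x) * hcen x r + c2 * r
    -- the key linearization
    have L : ∀ x y : R, f x * y - y * f x = x * f y - f y * x := by
      intro x y
      have h := hcom (x + y)
      rw [hadd x y] at h
      linear_combination (norm := noncomm_ring) h - hcom x - hcom y
    -- f ∘ f is commuting
    have Lcom : ∀ x : R, f (f x) * x = x * f (f x) := by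
      intro x
      linear_combination (norm := noncomm_ring) L (f x) x
    have N' : ∀ x y : R, f (f x) * y - y * f (f x) + (f (f y) * x - x * f (f y)) = 0 := by
      intro x y
      linear_combination (norm := noncomm_ring) L (f x) y + L (f y) x
    -- left relation:  (φx - x) * [φy, x] = 0
    have T : ∀ x y : R, (f (f x) - x) * (f (f y) * x - x * f (f y)) = 0 := by
      intro x y
      have star := N' (x * y) x
      rw [hanti x y, hanti (f y) (f x)] at star
      linear_combination (norm := noncomm_ring)
        star - Lcom x * f (f y) - Lcom x * y - x * N' x y
    have Q : ∀ x w : R, (f (f x) - x) * (w * x - x * w) = 0 := by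
      intro x w
      obtain ⟨u, hu⟩ := hf w
      obtain ⟨v, hv⟩ := hf u
      have h := T x v
      rw [hv, hu] at h
      exact h
    have Qm : ∀ x w r : R, (f (f x) - x) * w * (r * x - x * r) = 0 := by
      intro x w r
      linear_combination (norm := noncomm_ring) Q x (w * r) - Q x w * r
    -- right relation: [x, φy] * (φy - y) = 0
    have T2 : ∀ x y : R, (x * f (f y) - f (f y) * x) * (f (f y) - y) = 0 := by
      intro x y
      have star := N' (x * y) y
      rw [hanti x y, hanti (f y) (f x)] at star
      linear_combination (norm := noncomm_ring)
        star - N' x y * f (f y) - f (f x) * Lcom y - x * Lcom y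
    have Rm : ∀ x r w : R, (r * f (f x) - f (f x) * r) * w * (f (f x) - x) = 0 := by
      intro x r w
      linear_combination (norm := noncomm_ring) T2 (r * w) x - r * T2 w x
    have E0 : ∀ x r w : R,
        (r * (f (f x) - x) - (f (f x) - x) * r) * w * (f (f x) - x) = 0 := by
      intro x r w
      apply hsp
      intro w'
      linear_combination (norm := noncomm_ring)
        ((r * (f (f x) - x) - (f (f x) - x) * r) * w * (f (f x) - x) * w') * Rm x r w
          - ((r * (f (f x) - x) - (f (f x) - x) * r) * w) * Qm x w' r * (w * (f (f x) - x))
    have V : ∀ x r w : R, (r * x - x * r) * w * (f (f x) - x) = 0 := by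
      intro x r w
      linear_combination (norm := noncomm_ring) Rm x r w - E0 x r w
    have U : ∀ x y w r : R, (f (f y) - y) * w * (r * x - x * r) = 0 := by
      intro x y w r
      have vii : (f (f x) - x) * w * (r * y - y * r)
          + (f (f y) - y) * w * (r * x - x * r) = 0 := by
        have hx := Qm (x + y) w r
        rw [hadd x y, hadd (f x) (f y)] at hx
        linear_combination (norm := noncomm_ring) hx - Qm x w r - Qm y w r
      apply hsp
      intro w'
      linear_combination (norm := noncomm_ring)
        ((f (f y) - y) * w * (r * x - x * r) * w') * vii
          - ((f (f y) - y) * w) * V x r w' * (w * (r * y - y * r))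
    have Hcen : ∀ y s : R, (f (f y) - y) * s - s * (f (f y) - y) = 0 := by
      intro y s
      apply hsp
      intro w
      linear_combination (norm := noncomm_ring)
        U s y (s * w) (f (f y) - y) - s * U s y w (f (f y) - y)
    intro x y
    linear_combination (norm := noncomm_ring) L x (f y) - Hcen y x
  · -- SCP → centralizing
    intro hscp x r
    have E : ∀ a b z : R, f b * (a * z - z * a) + (b * z - z * b) * f a
        = a * (b * z - z * b) + (a * z - z * a) * b := by
      intro a b z
      have h3 := hscp (a * b) z
      rw [hanti a b] at h3
      linear_combination (norm := noncomm_ring)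
        -(f b * hscp a z) - hscp b z * f a + h3
    have A : ∀ w z : R, f z * (w * z - z * w) = (w * z - z * w) * z := by
      intro w z
      linear_combination (norm := noncomm_ring) E w z z
    have B : ∀ w z : R, (w * z - z * w) * f z = z * (w * z - z * w) := by
      intro w z
      linear_combination (norm := noncomm_ring) E z w z
    have cL : ∀ w : R, (f x * x - x * f x) * (w * x - x * w) = 0 := by
      intro w
      linear_combination (norm := noncomm_ring) A (x * w) x - x * A w x
    have cR : ∀ w : R, (w * x - x * w) * (f x * x - x * f x) = 0 := by
      intro w
      linear_combination (norm := noncomm_ring) B w x * x - B (w * x) x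
    have cRR : ∀ s w : R, (s * x - x * s) * w * (f x * x - x * f x) = 0 := by
      intro s w
      linear_combination (norm := noncomm_ring) cR (s * w) - s * cR w
    have c0 : f x * x - x * f x = 0 := by
      apply hsp
      intro w
      linear_combination (norm := noncomm_ring) cRR (f x) w
    linear_combination (norm := noncomm_ring) r * c0 - c0 * r
end

section
/- Let R be a semiprime ring (no assumption on characteristic or torsion) and f an antihomomorphism of R onto itself (f surjective). If f is strong commutativity preserving on R (i.e., [f(x),f(y)] = [x,y] for all x, y ∈ R), then f is centralizing on R, and in fact [f(x),x] = 0 for all x ∈ R. -/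
/-- Let `R` be a semiprime ring and `f` a surjective antihomomorphism of `R`.
If `f` is strong commutativity preserving, then `f` is commuting (hence centralizing). -/
theorem surj_antihom_scp_implies_commuting (R : Type*) [Ring R]
    (hsp : ∀ a : R, (∀ r : R, a * r * a = 0) → a = 0)
    (f : R → R)
    (hadd : ∀ x y : R, f (x + y) = f x + f y)
    (hanti : ∀ x y : R, f (x * y) = f y * f x)
    (hf : Function.Surjective f)
    (hscp : ∀ x y : R, f x * f y - f y * f x = x * y - y * x) :
    (∀ x : R, ∀ r : R, r * (f x * x - x * f x) = (f x * x - x * f x) * r) ∧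
      (∀ x : R, f x * x - x * f x = 0) := by
  have key : ∀ x : R, f x * x - x * f x = 0 := by
    intro x
    -- (★): x * [x,y] = [x,y] * f x
    have star : ∀ y : R, x * (x * y - y * x) = (x * y - y * x) * f x := by
      intro y
      have h1 := hscp x (x * y)
      rw [hanti x y] at h1
      linear_combination (norm := noncomm_ring) hscp x y * f x - h1
    -- (★★): f x * [x,y] = [x,y] * x
    have starstar : ∀ y : R, f x * (x * y - y * x) = (x * y - y * x) * x := by
      intro y
      have h3 := hscp (y * x) x
      rw [hanti y x] at h3
      linear_combination (norm := noncomm_ring) - f x * hscp x y - h3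
    -- (A): (x - f x) * [x,y] = - [x,y] * (x - f x)
    have hA : ∀ y : R, (x - f x) * (x * y - y * x) = - ((x * y - y * x) * (x - f x)) := by
      intro y
      linear_combination (norm := noncomm_ring) star y - starstar y
    -- [x,y] * c = 0 for all y
    have key1 : ∀ y : R, (x * y - y * x) * (f x * x - x * f x) = 0 := by
      intro y
      linear_combination (norm := noncomm_ring) hA (y * x) - hA y * x
    obtain ⟨y0, hy0⟩ := hf x
    have hc0 : f x * x - x * f x = x * y0 - y0 * x := by
      have := hscp x y0
      rw [hy0] at this
      exact this
    have key3 : ∀ r : R, (f x * x - x * f x) * r * (f x * x - x * f x) = 0 := by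
      intro r
      linear_combination (norm := noncomm_ring)
        key1 (y0 * r) - y0 * key1 r + hc0 * (r * (f x * x - x * f x))
    exact hsp _ key3
  refine ⟨fun x r => ?_, key⟩
  rw [key x, mul_zero, zero_mul]
end

section
/- Let R be a 2-torsion free semiprime ring, U a square closed Lie ideal of R, and T(U) = {x ∈ R : [x,r] ∈ U for all r ∈ R}. Then R[T(U),T(U)]R ⊆ T(U); that is, s·[x,y]·r ∈ T(U) for all x, y ∈ T(U) and all r, s ∈ R. -/
/-- Let `R` be a 2-torsion free semiprime ring, `U` a square closed Lie ideal of `R`,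
and `T(U) = {x ∈ R : [x,r] ∈ U for all r ∈ R}`. Then `R[T(U),T(U)]R ⊆ T(U)`. -/
theorem ideal_gen_comm_T_subset_T (R : Type*) [Ring R]
    (h2 : ∀ x : R, x + x = 0 → x = 0)
    (hsp : ∀ a : R, (∀ r : R, a * r * a = 0) → a = 0)
    (U : AddSubgroup R)
    (hLie : ∀ u ∈ U, ∀ r : R, u * r - r * u ∈ U)
    (hsq : ∀ u ∈ U, u * u ∈ U) :
    ∀ x ∈ {x : R | ∀ r : R, x * r - r * x ∈ U},
      ∀ y ∈ {x : R | ∀ r : R, x * r - r * x ∈ U},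
        ∀ r s : R, s * (x * y - y * x) * r ∈ {x : R | ∀ r : R, x * r - r * x ∈ U} := by
  intro x hx y hy r s t
  have h1 := hx (s * y * r * t)
  have h2' := hx (t * s * y * r)
  have h3 := hy (r * t * x * s)
  have h4 := hy (r * x * t * s)
  have h5 := hLie _ (hx r) (t * s * y)
  have h6 := hLie _ (hx s) (y * r * t)
  have h7 := hLie _ (hx (r * t)) (s * y)
  have h8 := hLie _ (hx (t * s)) (y * r)
  have hmem : (x * (s * y * r * t) - (s * y * r * t) * x)
      - (x * (t * s * y * r) - (t * s * y * r) * x)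
      - (y * (r * t * x * s) - (r * t * x * s) * y)
      + (y * (r * x * t * s) - (r * x * t * s) * y)
      - ((x * r - r * x) * (t * s * y) - (t * s * y) * (x * r - r * x))
      - ((x * s - s * x) * (y * r * t) - (y * r * t) * (x * s - s * x))
      + ((x * (r * t) - (r * t) * x) * (s * y) - (s * y) * (x * (r * t) - (r * t) * x))
      + ((x * (t * s) - (t * s) * x) * (y * r) - (y * r) * (x * (t * s) - (t * s) * x)) ∈ U :=
    U.add_mem (U.add_mem (U.sub_mem (U.sub_mem (U.add_mem (U.sub_mem (U.sub_mem h1 h2') h3) h4) h5) h6) h7) h8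
  have heq : s * (x * y - y * x) * r * t - t * (s * (x * y - y * x) * r)
      = (x * (s * y * r * t) - (s * y * r * t) * x)
      - (x * (t * s * y * r) - (t * s * y * r) * x)
      - (y * (r * t * x * s) - (r * t * x * s) * y)
      + (y * (r * x * t * s) - (r * x * t * s) * y)
      - ((x * r - r * x) * (t * s * y) - (t * s * y) * (x * r - r * x))
      - ((x * s - s * x) * (y * r * t) - (y * r * t) * (x * s - s * x))
      + ((x * (r * t) - (r * t) * x) * (s * y) - (s * y) * (x * (r * t) - (r * t) * x))
      + ((x * (t * s) - (t * s) * x) * (y * r) - (y * r) * (x * (t * s) - (t * s) * x)) := by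
    noncomm_ring
  show s * (x * y - y * x) * r * t - t * (s * (x * y - y * x) * r) ∈ U
  rw [heq]
  exact hmem
end

section
/- Let R be a 2-torsion free semiprime ring, U a square closed Lie ideal of R, and M = R[U,U]R the two-sided ideal of R generated by all commutators [u,v] with u, v ∈ U. Then [M,R] ⊆ U; that is, [m,r] ∈ U for all m ∈ M and r ∈ R. -/
/-- Let `R` be a 2-torsion free semiprime ring, `U` a square closed Lie ideal of `R`,
and `M = R[U,U]R` the two-sided ideal generated by the commutators `[u,v]`, `u, v ∈ U`.
Then `[M,R] ⊆ U`. -/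
theorem comm_ideal_gen_comm_subset_lie_ideal (R : Type*) [Ring R]
    (h2 : ∀ x : R, x + x = 0 → x = 0)
    (hsp : ∀ a : R, (∀ r : R, a * r * a = 0) → a = 0)
    (U : AddSubgroup R)
    (hLie : ∀ u ∈ U, ∀ r : R, u * r - r * u ∈ U)
    (hsq : ∀ u ∈ U, u * u ∈ U) :
    ∀ m ∈ TwoSidedIdeal.span {x : R | ∃ u ∈ U, ∃ v ∈ U, x = u * v - v * u},
      ∀ r : R, m * r - r * m ∈ U := by
  -- `T a` means `[a, R] ⊆ U`.
  set T : R → Prop := fun a => ∀ r : R, a * r - r * a ∈ U with hT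
  have hLie' : ∀ u ∈ U, ∀ r : R, r * u - u * r ∈ U := by
    intro u hu r
    have := U.neg_mem (hLie u hu r)
    simpa using this
  have hTU : ∀ u ∈ U, T u := fun u hu => hLie u hu
  have hTadd : ∀ a b, T a → T b → T (a + b) := by
    intro a b ha hb r
    have : (a + b) * r - r * (a + b) = (a * r - r * a) + (b * r - r * b) := by noncomm_ring
    rw [this]
    exact U.add_mem (ha r) (hb r)
  have hTsub : ∀ a b, T a → T b → T (a - b) := by
    intro a b ha hb r
    have : (a - b) * r - r * (a - b) = (a * r - r * a) - (b * r - r * b) := by noncomm_ring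
    rw [this]
    exact U.sub_mem (ha r) (hb r)
  -- T is closed under multiplication: [ab, r] = [a, br] + [b, ra].
  have hTmul : ∀ a b, T a → T b → T (a * b) := by
    intro a b ha hb r
    have : a * b * r - r * (a * b)
        = (a * (b * r) - (b * r) * a) + (b * (r * a) - (r * a) * b) := by noncomm_ring
    rw [this]
    exact U.add_mem (ha (b * r)) (hb (r * a))
  -- x·[u,v] ∈ T, since x[u,v] = [xu, v] - [x,v]·u.
  have hxs : ∀ u ∈ U, ∀ v ∈ U, ∀ x : R, T (x * (u * v - v * u)) := by
    intro u hu v hv x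
    have hA : T ((x * u) * v - v * (x * u)) := hTU _ (hLie' v hv (x * u))
    have hB : T ((x * v - v * x) * u) :=
      hTmul _ _ (hTU _ (hLie' v hv x)) (hTU u hu)
    have hEq : x * (u * v - v * u)
        = ((x * u) * v - v * (x * u)) - ((x * v - v * x) * u) := by noncomm_ring
    rw [hEq]
    exact hTsub _ _ hA hB
  -- x·[u,v]·y ∈ T: x[u,v]y = [x[u,v], y] + (yx)[u,v].
  have hxsy : ∀ u ∈ U, ∀ v ∈ U, ∀ x y : R, T (x * (u * v - v * u) * y) := by
    intro u hu v hv x y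
    have h1 : T (x * (u * v - v * u) * y - y * (x * (u * v - v * u))) :=
      hTU _ (hxs u hu v hv x y)
    have h2 : T (y * (x * (u * v - v * u))) := by
      have := hxs u hu v hv (y * x)
      simpa [mul_assoc] using this
    have hEq : x * (u * v - v * u) * y
        = (x * (u * v - v * u) * y - y * (x * (u * v - v * u)))
          + y * (x * (u * v - v * u)) := by noncomm_ring
    rw [hEq]
    exact hTadd _ _ h1 h2
  -- Package `{m | ∀ x y, T (x*m*y)}` as a two-sided ideal.
  intro m hm r
  let J : TwoSidedIdeal R := TwoSidedIdeal.mk'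
    {m : R | ∀ x y : R, T (x * m * y)}
    (by intro x y; simpa using (fun r => by simpa using U.zero_mem))
    (by
      intro a b ha hb x y
      have : x * (a + b) * y = x * a * y + x * b * y := by noncomm_ring
      rw [this]; exact hTadd _ _ (ha x y) (hb x y))
    (by
      intro a ha x y
      have : x * (-a) * y = (0 : R) - x * a * y := by noncomm_ring
      rw [this]
      exact hTsub _ _ (fun r => by simpa using U.zero_mem) (ha x y))
    (by
      intro a b hb x y
      have : x * (a * b) * y = (x * a) * b * y := by noncomm_ring
      rw [this]; exact hb (x * a) y)
    (by
      intro a b ha x y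
      have : x * (a * b) * y = x * a * (b * y) := by noncomm_ring
      rw [this]; exact ha x (b * y))
  have hmemJ : ∀ z : R, z ∈ J ↔ ∀ x y : R, T (x * z * y) := fun z =>
    TwoSidedIdeal.mem_mk' _ _ _ _ _ _ z
  have hmJ : m ∈ J := by
    refine TwoSidedIdeal.mem_span_iff.mp hm J ?_
    rintro g ⟨u, hu, v, hv, rfl⟩
    simp only [SetLike.mem_coe]
    exact (hmemJ _).mpr (fun x y => hxsy u hu v hv x y)
  have := ((hmemJ m).mp hmJ) 1 1
  simpa using this r
end

section
/- Let R be a 2-torsion free semiprime ring, U a square closed Lie ideal of R, and M = R[U,U]R the two-sided ideal of R generated by all commutators [u,v] with u, v ∈ U. If a ∈ M satisfies a·u·a = 0 for all u ∈ U, then a = 0. -/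
/-!
Doubling carries the whole ideal `M = R[U,U]R` into `U`: for `u, v ∈ U` the square-closedness
gives `2uv ∈ U`, and a few Lie-ideal manipulations then give `2x[u,v]y ∈ U`. Hence `a(2m)a = 0`,
so `ama = 0` for all `m ∈ M` by 2-torsion-freeness. For `b = ara` we get `bsb = a(rasar)a = 0`,
since `rasar ∈ M`; semiprimeness gives `ara = 0` for all `r`, and once more `a = 0`.
-/

open Pointwise

section LieIdeal

variable {R : Type*} [Ring R] {U : AddSubgroup R}

theorem mul_add_mul_swap_mem_of_square_closed (hsq : ∀ u ∈ U, u * u ∈ U)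
    {u v : R} (hu : u ∈ U) (hv : v ∈ U) : u * v + v * u ∈ U := by
  have e : u * v + v * u = (u + v) * (u + v) - u * u - v * v := by noncomm_ring
  rw [e]
  exact U.sub_mem (U.sub_mem (hsq _ (U.add_mem hu hv)) (hsq u hu)) (hsq v hv)

variable (hLie : ∀ u ∈ U, ∀ r : R, u * r - r * u ∈ U) (hsq : ∀ u ∈ U, u * u ∈ U)
include hLie hsq

theorem two_nsmul_mul_mem {u v : R} (hu : u ∈ U) (hv : v ∈ U) : 2 • (u * v) ∈ U := by
  have e : 2 • (u * v) = (u * v + v * u) + (u * v - v * u) := by noncomm_ring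
  rw [e]
  exact U.add_mem (mul_add_mul_swap_mem_of_square_closed hsq hu hv) (hLie u hu v)

theorem two_nsmul_mul_commutator_mem {u v : R} (hu : u ∈ U) (hv : v ∈ U) (x : R) :
    2 • (x * (u * v - v * u)) ∈ U := by
  have e : 2 • (x * (u * v - v * u)) =
      2 • (u * (x * v) - x * v * u) - 2 • ((u * x - x * u) * v) := by noncomm_ring
  rw [e]
  exact U.sub_mem (U.nsmul_mem (hLie u hu _) 2) (two_nsmul_mul_mem hLie hsq (hLie u hu x) hv)

theorem two_nsmul_mul_commutator_mul_mem {u v : R} (hu : u ∈ U) (hv : v ∈ U) (x y : R) :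
    2 • (x * (u * v - v * u) * y) ∈ U := by
  set c := 2 • (x * (u * v - v * u))
  have e : 2 • (x * (u * v - v * u) * y) = (c * y - y * c) + 2 • (y * x * (u * v - v * u)) := by
    simp only [c]; noncomm_ring
  rw [e]
  exact U.add_mem (hLie c (two_nsmul_mul_commutator_mem hLie hsq hu hv x) y)
    (two_nsmul_mul_commutator_mem hLie hsq hu hv _)

theorem two_nsmul_mem_of_mem_span_commutators {m : R}
    (hm : m ∈ TwoSidedIdeal.span {x : R | ∃ u ∈ U, ∃ v ∈ U, x = u * v - v * u}) :
    2 • m ∈ U := by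
  rw [TwoSidedIdeal.mem_span_iff_mem_addSubgroup_closure] at hm
  suffices h : AddSubgroup.closure _ ≤ U.comap (nsmulAddMonoidHom 2) from h hm
  rw [AddSubgroup.closure_le]
  rintro _ ⟨_, ⟨x, -, _, ⟨u, hu, v, hv, rfl⟩, rfl⟩, y, -, rfl⟩
  exact two_nsmul_mul_commutator_mul_mem hLie hsq hu hv x y

end LieIdeal

theorem eq_zero_of_mem_of_forall_mul_mem_mul_eq_zero {R : Type*} [Ring R]
    (hsp : ∀ a : R, (∀ r : R, a * r * a = 0) → a = 0) {I : TwoSidedIdeal R} {a : R}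
    (haI : a ∈ I) (ha : ∀ m ∈ I, a * m * a = 0) : a = 0 := by
  refine hsp a fun r => hsp _ fun s => ?_
  have hmem : r * a * s * a * r ∈ I :=
    I.mul_mem_right _ _ (I.mul_mem_right _ _ (I.mul_mem_right _ _ (I.mul_mem_left _ _ haI)))
  calc a * r * a * s * (a * r * a) = a * (r * a * s * a * r) * a := by noncomm_ring
    _ = 0 := ha _ hmem

/-- Let `R` be a 2-torsion free semiprime ring, `U` a square closed Lie ideal of `R`,
and `M = R[U,U]R`. If `a ∈ M` satisfies `a * u * a = 0` for all `u ∈ U`, then `a = 0`. -/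
theorem mem_ideal_gen_comm_ann_lie_ideal_eq_zero (R : Type*) [Ring R]
    (h2 : ∀ x : R, x + x = 0 → x = 0)
    (hsp : ∀ a : R, (∀ r : R, a * r * a = 0) → a = 0)
    (U : AddSubgroup R)
    (hLie : ∀ u ∈ U, ∀ r : R, u * r - r * u ∈ U)
    (hsq : ∀ u ∈ U, u * u ∈ U)
    (a : R)
    (haM : a ∈ TwoSidedIdeal.span {x : R | ∃ u ∈ U, ∃ v ∈ U, x = u * v - v * u})
    (ha : ∀ u ∈ U, a * u * a = 0) :
    a = 0 := by
  refine eq_zero_of_mem_of_forall_mul_mem_mul_eq_zero hsp haM fun m hm => h2 _ ?_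
  have h := ha _ (two_nsmul_mem_of_mem_span_commutators hLie hsq hm)
  rwa [two_nsmul, mul_add, add_mul] at h
end

section
/- Let R be a 2-torsion free semiprime ring, U a square closed Lie ideal of R, and f an endomorphism of R. If [f(x),x] ∈ Z(R) for all x ∈ U (f is centralizing on U), then [f(x),x] = 0 for all x ∈ U (f is commuting on U). -/
/-- Let `R` be a 2-torsion free semiprime ring, `U` a square closed Lie ideal of `R`,
and `f` an endomorphism of `R`. If `f` is centralizing on `U`, then `f` is commuting on
`U`. -/
theorem endo_centralizing_implies_commuting_on_lie_ideal (R : Type*) [Ring R]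
    (h2 : ∀ x : R, x + x = 0 → x = 0)
    (hsp : ∀ a : R, (∀ r : R, a * r * a = 0) → a = 0)
    (U : AddSubgroup R)
    (hLie : ∀ u ∈ U, ∀ r : R, u * r - r * u ∈ U)
    (hsq : ∀ u ∈ U, u * u ∈ U)
    (f : R →+* R)
    (hc : ∀ x ∈ U, ∀ r : R, r * (f x * x - x * f x) = (f x * x - x * f x) * r) :
    ∀ x ∈ U, f x * x - x * f x = 0 := by
  intro x hx
  set a := f x with ha
  set c := a * x - x * a with hcdef
  have hxx : x * x ∈ U := hsq x hx
  have hsum : x + x * x ∈ U := U.add_mem hx hxx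
  have hcc : ∀ r : R, r * c = c * r := hc x hx
  have hfxx : f (x * x) = a * a := by rw [map_mul]
  have hfs : f (x + x * x) = a + a * a := by rw [map_add, map_mul]
  set G : R := (a * (x * x) - (x * x) * a) + ((a * a) * x - x * (a * a)) with hGdef
  -- G is central
  have hGc : ∀ r : R, r * G = G * r := by
    intro r
    have h1 := hcc r
    have h2 := hc (x * x) hxx r
    have h3 := hc (x + x * x) hsum r
    rw [hfxx] at h2
    rw [hfs] at h3
    have hGeq : G = ((a + a * a) * (x + x * x) - (x + x * x) * (a + a * a))
        - c - (a * a * (x * x) - x * x * (a * a)) := by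
      rw [hGdef, hcdef]; noncomm_ring
    rw [hGeq, mul_sub, mul_sub, sub_mul, sub_mul, h1, h2, h3]
  -- key step: 2 c² = 0
  have key : c * c + c * c = 0 := by
    have hGa : a * G = G * a := hGc a
    have h1 := hcc a
    have h2 := hcc (a * x)
    have h3 := hcc (a * a)
    have h4 := hcc x
    have e : a * G - G * a =
        (c * c + c * c) + ((a * c - c * a) * x + ((a * x) * c - c * (a * x))
          + ((a * a) * c - c * (a * a)) + ((c * x - x * c) * a)) := by
      rw [hGdef, hcdef]; noncomm_ring
    rw [hGa, sub_self] at e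
    rw [h2, h3, h4] at e
    rw [← h1] at e
    simp only [sub_self, zero_mul, add_zero] at e
    exact e.symm
  have hc2 : c * c = 0 := h2 _ key
  have : c = 0 := by
    apply hsp
    intro r
    rw [mul_assoc, hcc r, ← mul_assoc, hc2, zero_mul]
  exact this
end

section
/- Let R be a 2-torsion free semiprime ring, U a square closed Lie ideal of R with [U,U] ≠ 0, and f an antihomomorphism of R such that f(U) = U. If f is centralizing on U (i.e., [f(x),x] ∈ Z(R) for all x ∈ U), then [f(x),y] = [y,x] for all x, y ∈ U. -/
/-- In a 2-torsion free semiprime ring, if `a` lies in a Lie ideal `U` and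
`a * u * a = 0` for all `u ∈ U`, then `a = 0`. -/
private lemma aUa_zero {R : Type*} [Ring R]
    (h2 : ∀ x : R, x + x = 0 → x = 0)
    (hsp : ∀ a : R, (∀ r : R, a * r * a = 0) → a = 0)
    (U : AddSubgroup R)
    (hLie : ∀ u ∈ U, ∀ r : R, u * r - r * u ∈ U)
    (a : R) (ha : a ∈ U) (hU : ∀ u ∈ U, a * u * a = 0) : a = 0 := by
  have h3 : a * a * a = 0 := hU a ha
  have e2 : ∀ t : R, a * a * t * a = a * t * (a * a) := by
    intro t
    have h := hU _ (hLie a ha t)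
    have expand : a * a * t * a - a * t * (a * a) = a * (a * t - t * a) * a := by noncomm_ring
    rw [h] at expand
    exact sub_eq_zero.mp expand
  have asq : a * a = 0 := by
    apply hsp
    intro r
    calc a * a * r * (a * a) = (a * a * r * a) * a := by noncomm_ring
      _ = (a * r * (a * a)) * a := by rw [e2]
      _ = a * r * (a * a * a) := by noncomm_ring
      _ = 0 := by rw [h3]; noncomm_ring
  have e4 : ∀ u ∈ U, ∀ t : R, a * u * t * a = a * t * u * a := by
    intro u hu t
    have h := hU _ (hLie u hu t)
    have expand : a * u * t * a - a * t * u * a = a * (u * t - t * u) * a := by noncomm_ring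
    rw [h] at expand
    exact sub_eq_zero.mp expand
  apply hsp
  intro r
  apply hsp
  intro s
  set u0 : R := (a * s - s * a) * a - a * (a * s - s * a) with hu0def
  have hu0U : u0 ∈ U := by rw [hu0def]; exact hLie _ (hLie a ha s) a
  have hu0 : u0 = a * s * a + a * s * a - (a * a * s + s * (a * a)) := by
    rw [hu0def]; noncomm_ring
  have hu0' : u0 = a * s * a + a * s * a := by
    rw [hu0, asq]; noncomm_ring
  have hau0 : a * u0 = 0 := by
    rw [hu0']
    calc a * (a * s * a + a * s * a) = (a * a) * s * a + (a * a) * s * a := by noncomm_ring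
      _ = 0 := by rw [asq]; noncomm_ring
  have hu0a : u0 * a = 0 := by
    rw [hu0']
    calc (a * s * a + a * s * a) * a = a * s * (a * a) + a * s * (a * a) := by noncomm_ring
      _ = 0 := by rw [asq]; noncomm_ring
  have key : a * r * u0 * r * a = 0 := by
    apply h2
    have hγ := e4 _ (hLie u0 hu0U r) r
    -- hγ : a * (u0 * r - r * u0) * r * a = a * r * (u0 * r - r * u0) * a
    have expand : a * r * u0 * r * a + a * r * u0 * r * a
        = (a * r * (u0 * r - r * u0) * a - a * (u0 * r - r * u0) * r * a)
          + (a * u0) * (r * (r * a)) + a * r * (r * (u0 * a)) := by noncomm_ring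
    rw [hau0, hu0a, hγ] at expand
    exact expand.trans (by noncomm_ring)
  have expand : a * r * a * s * (a * r * a) + a * r * a * s * (a * r * a)
      = a * r * (a * s * a + a * s * a) * r * a := by noncomm_ring
  apply h2
  rw [expand, ← hu0']
  exact key

/-- Let `R` be a 2-torsion free semiprime ring, `U` a square closed Lie ideal of `R`
with `[U,U] ≠ 0`, and `f` an antihomomorphism of `R` with `f(U) = U`.
If `f` is centralizing on `U`, then `[f(x),y] = [y,x]` for all `x, y ∈ U`. -/
theorem antihom_centralizing_bracket_eq (R : Type*) [Ring R]
    (h2 : ∀ x : R, x + x = 0 → x = 0)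
    (hsp : ∀ a : R, (∀ r : R, a * r * a = 0) → a = 0)
    (U : AddSubgroup R)
    (hLie : ∀ u ∈ U, ∀ r : R, u * r - r * u ∈ U)
    (hsq : ∀ u ∈ U, u * u ∈ U)
    (hUU : ∃ u ∈ U, ∃ v ∈ U, u * v - v * u ≠ 0)
    (f : R → R)
    (hadd : ∀ x y : R, f (x + y) = f x + f y)
    (hanti : ∀ x y : R, f (x * y) = f y * f x)
    (hfU : f '' (U : Set R) = (U : Set R))
    (hc : ∀ x ∈ U, ∀ r : R, r * (f x * x - x * f x) = (f x * x - x * f x) * r) :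
    ∀ x ∈ U, ∀ y ∈ U, f x * y - y * f x = y * x - x * y := by
  -- 2ab ∈ U for a,b ∈ U
  have mem2 : ∀ a ∈ U, ∀ b ∈ U, a * b + a * b ∈ U := by
    intro a ha b hb
    have m1 : (a + b) * (a + b) - a * a - b * b ∈ U :=
      U.sub_mem (U.sub_mem (hsq _ (U.add_mem ha hb)) (hsq a ha)) (hsq b hb)
    have m2 : a * b - b * a ∈ U := hLie a ha b
    have e : a * b + a * b = ((a + b) * (a + b) - a * a - b * b) + (a * b - b * a) := by
      noncomm_ring
    rw [e]; exact U.add_mem m1 m2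
  -- f is commuting on U
  have hcomm : ∀ y ∈ U, f y * y - y * f y = 0 := by
    intro y hy
    have hy2 : y * y ∈ U := hsq y hy
    have hyy : y + y * y ∈ U := U.add_mem hy hy2
    have Hh := hc y hy
    have Hcross : ∀ r : R,
        r * ((f y * y - y * f y) * y + y * (f y * y - y * f y)
           + f y * (f y * y - y * f y) + (f y * y - y * f y) * f y)
        = ((f y * y - y * f y) * y + y * (f y * y - y * f y)
           + f y * (f y * y - y * f y) + (f y * y - y * f y) * f y) * r := by
      intro r
      have h1 := hc (y + y * y) hyy r
      rw [hadd, hanti] at h1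
      have hB := hc (y * y) hy2 r
      rw [hanti] at hB
      have hC := hc y hy r
      have expand : r * ((f y * y - y * f y) * y + y * (f y * y - y * f y)
             + f y * (f y * y - y * f y) + (f y * y - y * f y) * f y)
           - ((f y * y - y * f y) * y + y * (f y * y - y * f y)
             + f y * (f y * y - y * f y) + (f y * y - y * f y) * f y) * r
          = (r * ((f y + f y * f y) * (y + y * y) - (y + y * y) * (f y + f y * f y))
              - ((f y + f y * f y) * (y + y * y) - (y + y * y) * (f y + f y * f y)) * r)
            - (r * (f y * f y * (y * y) - y * y * (f y * f y))
              - (f y * f y * (y * y) - y * y * (f y * f y)) * r)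
            - (r * (f y * y - y * f y) - (f y * y - y * f y) * r) := by noncomm_ring
      rw [h1, hB, hC] at expand
      exact sub_eq_zero.mp (expand.trans (by noncomm_ring))
    have hδ := Hh (f y)
    have h1 := Hcross (f y)
    have expand2 : (f y * y - y * f y) * (f y * y - y * f y)
        + (f y * y - y * f y) * (f y * y - y * f y)
        = (f y * ((f y * y - y * f y) * y + y * (f y * y - y * f y)
             + f y * (f y * y - y * f y) + (f y * y - y * f y) * f y)
           - ((f y * y - y * f y) * y + y * (f y * y - y * f y)
             + f y * (f y * y - y * f y) + (f y * y - y * f y) * f y) * f y)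
          - ((f y * (f y * y - y * f y) - (f y * y - y * f y) * f y) * y
             + y * (f y * (f y * y - y * f y) - (f y * y - y * f y) * f y)
             + f y * (f y * (f y * y - y * f y) - (f y * y - y * f y) * f y)
             + (f y * (f y * y - y * f y) - (f y * y - y * f y) * f y) * f y) := by
      noncomm_ring
    rw [h1, hδ] at expand2
    have hhh : (f y * y - y * f y) * (f y * y - y * f y) = 0 :=
      h2 _ (expand2.trans (by noncomm_ring))
    apply hsp
    intro r
    have hr := Hh r
    calc (f y * y - y * f y) * r * (f y * y - y * f y)
        = (f y * y - y * f y) * (r * (f y * y - y * f y)) := by rw [mul_assoc]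
      _ = (f y * y - y * f y) * ((f y * y - y * f y) * r) := by rw [hr]
      _ = ((f y * y - y * f y) * (f y * y - y * f y)) * r := by rw [mul_assoc]
      _ = 0 := by rw [hhh, zero_mul]
  -- linearized commuting
  have Ccomm : ∀ ya ∈ U, ∀ za ∈ U,
      f ya * za - za * f ya + (f za * ya - ya * f za) = 0 := by
    intro ya hya za hza
    have h1 := hcomm (ya + za) (U.add_mem hya hza)
    rw [hadd] at h1
    have hA := hcomm ya hya
    have hB := hcomm za hza
    have expand : f ya * za - za * f ya + (f za * ya - ya * f za)
        = ((f ya + f za) * (ya + za) - (ya + za) * (f ya + f za))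
          - (f ya * ya - ya * f ya) - (f za * za - za * f za) := by noncomm_ring
    rw [h1, hA, hB] at expand
    exact expand.trans (by noncomm_ring)
  intro x hx
  have hFmem : f x ∈ U := by
    have : f x ∈ (U : Set R) := by rw [← hfU]; exact Set.mem_image_of_mem f hx
    exact this
  have hfx0 : f x * x - x * f x = 0 := hcomm x hx
  -- star : x T_z = T_z f(x)
  have star : ∀ z ∈ U,
      x * (f x * z - z * f x) - (f x * z - z * f x) * f x = 0 := by
    intro z hz
    have hw : x * z + x * z ∈ U := mem2 x hx z hz
    have h1 := Ccomm x hx _ hw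
    rw [hadd, hanti] at h1
    have h3 := Ccomm x hx z hz
    apply h2
    have expand : (x * (f x * z - z * f x) - (f x * z - z * f x) * f x)
        + (x * (f x * z - z * f x) - (f x * z - z * f x) * f x)
        = (f x * (x * z + x * z) - (x * z + x * z) * f x
            + ((f z * f x + f z * f x) * x - x * (f z * f x + f z * f x)))
          - ((f x * x - x * f x) * z + (f x * x - x * f x) * z)
          - (f z * (f x * x - x * f x) + f z * (f x * x - x * f x))
          - ((f x * z - z * f x + (f z * x - x * f z)) * f x
             + (f x * z - z * f x + (f z * x - x * f z)) * f x) := by noncomm_ring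
    rw [h1, h3, hfx0] at expand
    exact expand.trans (by noncomm_ring)
  -- lemI : S_z T_w = 0
  have lemI : ∀ z ∈ U, ∀ w ∈ U,
      (f x * z - z * f x + (x * z - z * x)) * (f x * w - w * f x) = 0 := by
    intro z hz w hw
    have hzw : z * w + z * w ∈ U := mem2 z hz w hw
    have A1 := star _ hzw
    have A2 := star z hz
    have A3 := star w hw
    apply h2
    have expand : (f x * z - z * f x + (x * z - z * x)) * (f x * w - w * f x)
        + (f x * z - z * f x + (x * z - z * x)) * (f x * w - w * f x)
        = (x * (f x * (z * w + z * w) - (z * w + z * w) * f x)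
            - (f x * (z * w + z * w) - (z * w + z * w) * f x) * f x)
          - ((x * (f x * z - z * f x) - (f x * z - z * f x) * f x) * w
             + (x * (f x * z - z * f x) - (f x * z - z * f x) * f x) * w)
          - (z * (x * (f x * w - w * f x) - (f x * w - w * f x) * f x)
             + z * (x * (f x * w - w * f x) - (f x * w - w * f x) * f x)) := by
      noncomm_ring
    rw [A1, A2, A3] at expand
    exact expand.trans (by noncomm_ring)
  -- lemI' : S_z w T_v = 0
  have lemI' : ∀ z ∈ U, ∀ w ∈ U, ∀ v ∈ U,
      (f x * z - z * f x + (x * z - z * x)) * w * (f x * v - v * f x) = 0 := by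
    intro z hz w hw v hv
    have hwv : w * v + w * v ∈ U := mem2 w hw v hv
    have B1 := lemI z hz _ hwv
    have B2 := lemI z hz w hw
    apply h2
    have expand : (f x * z - z * f x + (x * z - z * x)) * w * (f x * v - v * f x)
        + (f x * z - z * f x + (x * z - z * x)) * w * (f x * v - v * f x)
        = (f x * z - z * f x + (x * z - z * x))
            * (f x * (w * v + w * v) - (w * v + w * v) * f x)
          - ((f x * z - z * f x + (x * z - z * x)) * (f x * w - w * f x) * v
             + (f x * z - z * f x + (x * z - z * x)) * (f x * w - w * f x) * v) := by
      noncomm_ring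
    rw [B1, B2] at expand
    exact expand.trans (by noncomm_ring)
  -- lemC : S_z w [x,v] = 0
  have lemC : ∀ z ∈ U, ∀ w ∈ U, ∀ v ∈ U,
      (f x * z - z * f x + (x * z - z * x)) * w * (x * v - v * x) = 0 := by
    intro z hz w hw v hv
    have hv' : v ∈ f '' (U : Set R) := by rw [hfU]; exact hv
    obtain ⟨p, hp, hfp⟩ := hv'
    have D1 := lemI' z hz w hw p hp
    have D2 := Ccomm x hx p hp
    rw [← hfp]
    have expand : (f x * z - z * f x + (x * z - z * x)) * w * (x * f p - f p * x)
        = (f x * z - z * f x + (x * z - z * x)) * w * (f x * p - p * f x)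
          - (f x * z - z * f x + (x * z - z * x)) * w
              * (f x * p - p * f x + (f p * x - x * f p)) := by noncomm_ring
    rw [D1, D2] at expand
    exact expand.trans (by noncomm_ring)
  -- lemS : S_z w S_v = 0
  have lemS : ∀ z ∈ U, ∀ w ∈ U, ∀ v ∈ U,
      (f x * z - z * f x + (x * z - z * x)) * w
        * (f x * v - v * f x + (x * v - v * x)) = 0 := by
    intro z hz w hw v hv
    have E1 := lemI' z hz w hw v hv
    have E2 := lemC z hz w hw v hv
    have expand : (f x * z - z * f x + (x * z - z * x)) * w
          * (f x * v - v * f x + (x * v - v * x))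
        = (f x * z - z * f x + (x * z - z * x)) * w * (f x * v - v * f x)
          + (f x * z - z * f x + (x * z - z * x)) * w * (x * v - v * x) := by
      noncomm_ring
    rw [E1, E2] at expand
    exact expand.trans (by simp)
  intro y hy
  have hSU : f x * y - y * f x + (x * y - y * x) ∈ U :=
    U.add_mem (hLie _ hFmem y) (hLie x hx y)
  have hS0 : f x * y - y * f x + (x * y - y * x) = 0 := by
    apply aUa_zero h2 hsp U hLie _ hSU
    intro u hu
    exact lemS y hy u hu y hy
  have final : f x * y - y * f x - (y * x - x * y) = 0 := by
    have expand : f x * y - y * f x - (y * x - x * y)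
        = f x * y - y * f x + (x * y - y * x) := by noncomm_ring
    rw [expand]; exact hS0
  exact sub_eq_zero.mp final
end

section
/- Let R be a 2-torsion free ring, U a square closed Lie ideal of R, and f an endomorphism of R. If f is strong commutativity preserving on U (i.e., [f(x),f(y)] = [x,y] for all x, y ∈ U), then (x − f(x))·[x,y] = 0 for all x, y ∈ U. -/
/-- Let `R` be a 2-torsion free ring, `U` a square closed Lie ideal of `R`, and `f` an
endomorphism of `R`. If `f` is strong commutativity preserving on `U`, then
`(x - f(x)) * [x,y] = 0` for all `x, y ∈ U`. -/
theorem endo_scp_sub_mul_comm_eq_zero (R : Type*) [Ring R]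
    (h2 : ∀ x : R, x + x = 0 → x = 0)
    (U : AddSubgroup R)
    (hLie : ∀ u ∈ U, ∀ r : R, u * r - r * u ∈ U)
    (hsq : ∀ u ∈ U, u * u ∈ U)
    (f : R →+* R)
    (hscp : ∀ x ∈ U, ∀ y ∈ U, f x * f y - f y * f x = x * y - y * x) :
    ∀ x ∈ U, ∀ y ∈ U, (x - f x) * (x * y - y * x) = 0 := by
  intro x hx y hy
  have hxy : x * y + x * y ∈ U := by
    have h1 : (x + y) * (x + y) ∈ U := hsq _ (U.add_mem hx hy)
    have h2' : x * y - y * x ∈ U := hLie x hx y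
    have : x * y + x * y =
        ((x + y) * (x + y) - x * x - y * y) + (x * y - y * x) := by noncomm_ring
    rw [this]
    exact U.add_mem (U.sub_mem (U.sub_mem h1 (hsq x hx)) (hsq y hy)) h2'
  apply h2
  have e1 := hscp x hx y hy
  have e2 := hscp x hx _ hxy
  simp only [map_add, map_mul] at e2
  have key : f x * (x * y - y * x) + f x * (x * y - y * x)
      = x * (x * y - y * x) + x * (x * y - y * x) := by
    have step : f x * (f x * f y - f y * f x) + f x * (f x * f y - f y * f x)
        = x * (x * y - y * x) + x * (x * y - y * x) := by
      calc f x * (f x * f y - f y * f x) + f x * (f x * f y - f y * f x)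
          = f x * (f x * f y + f x * f y) - (f x * f y + f x * f y) * f x := by
            noncomm_ring
        _ = x * (x * y + x * y) - (x * y + x * y) * x := e2
        _ = x * (x * y - y * x) + x * (x * y - y * x) := by noncomm_ring
    rwa [e1] at step
  have expand : (x - f x) * (x * y - y * x) + (x - f x) * (x * y - y * x)
      = (x * (x * y - y * x) + x * (x * y - y * x))
        - (f x * (x * y - y * x) + f x * (x * y - y * x)) := by noncomm_ring
  rw [expand, key, sub_self]
end
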